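/- arXiv:1612.05493 — 13 statements merged into one kernel-verified Lean document; each statement's English description precedes it below -/
import Mathlib

section
/- Let V, W be closed subspaces of H with H = V ⊕ W⊥, and T ∈ L(H,K) with Ker(T) = W⊥. Let L_T^W = {U ∈ L(K,H) : UT = π_W and Im(U) = W} and L_T^{V,W⊥} = {U ∈ L(K,H) : UT = π_{V,W⊥} and Im(U) = V}. Then the map A ↦ π_{V,W⊥}A is a linear bijection from L_T^W onto L_T^{V,W⊥}, with inverse B ↦ π_W B. -/
/-!
Both `π_W` and `π_{V,Wᗮ}` are idempotents with kernel `Wᗮ`, so each absorbs the other on the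
right: `π_{V,Wᗮ} π_W = π_{V,Wᗮ}` and `π_W π_{V,Wᗮ} = π_W`. Composing with one of them therefore
turns `U T = π_W` into `U T = π_{V,Wᗮ}` and back, maps the range of one projection onto the range
of the other, and acts as the identity on operators whose range lies in its own range.
-/

open ContinuousLinearMap Set

theorem Submodule.eq_projection_of_eqOn {R E : Type*} [Ring R] [AddCommGroup E] [Module R E]
    {p q : Submodule R E} (hpq : IsCompl p q) {f : E →ₗ[R] E}
    (hp : ∀ x ∈ p, f x = x) (hq : ∀ x ∈ q, f x = 0) : f = p.projection q hpq :=
  LinearMap.ext_on_codisjoint hpq.codisjoint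
    (fun x hx ↦ by rw [hp x hx, Submodule.projection_apply_of_mem_left hpq hx])
    (fun x hx ↦ by rw [hq x hx, Submodule.projection_apply_of_mem_right hpq hx])

section LeftInverses

variable {R M N : Type*} [Ring R] [TopologicalSpace M] [AddCommGroup M] [Module R M]
  [TopologicalSpace N] [AddCommGroup N] [Module R N]

/-- The paper's `L_T^W` is `leftInverseSet T π_W`, and `L_T^{V,Wᗮ}` is
`leftInverseSet T π_{V,Wᗮ}`. -/
def leftInverseSet (T : M →L[R] N) (Q : M →L[R] M) : Set (N →L[R] M) :=
  {U | U ∘L T = Q ∧ LinearMap.range (U : N →ₗ[R] M) = LinearMap.range (Q : M →ₗ[R] M)}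

theorem ContinuousLinearMap.comp_eq_left_of_ker_le {P Q : M →L[R] M} (hQ : IsIdempotentElem Q)
    (h : LinearMap.ker (Q : M →ₗ[R] M) ≤ LinearMap.ker (P : M →ₗ[R] M)) : P ∘L Q = P :=
  coe_inj.1 ((LinearMap.IsIdempotentElem.comp_eq_left_iff hQ.toLinearMap _).2 h)

variable {T : M →L[R] N} {P Q : M →L[R] M}

theorem comp_mem_leftInverseSet (hPQ : P ∘L Q = P) {A : N →L[R] M}
    (hA : A ∈ leftInverseSet T Q) : P ∘L A ∈ leftInverseSet T P := by
  obtain ⟨hAT, hrange⟩ := hA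
  refine ⟨by rw [comp_assoc, hAT, hPQ], ?_⟩
  rw [toLinearMap_comp, LinearMap.range_comp, hrange, ← LinearMap.range_comp, ← toLinearMap_comp,
    hPQ]

theorem comp_comp_of_mem_leftInverseSet (hQ : IsIdempotentElem Q) (hQP : Q ∘L P = Q)
    {A : N →L[R] M} (hA : A ∈ leftInverseSet T Q) : Q ∘L (P ∘L A) = A := by
  rw [← comp_assoc, hQP]
  exact coe_inj.1 ((LinearMap.IsIdempotentElem.comp_eq_right_iff hQ.toLinearMap _).2 hA.2.le)

variable (hP : IsIdempotentElem P) (hQ : IsIdempotentElem Q)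
  (hker : LinearMap.ker (P : M →ₗ[R] M) = LinearMap.ker (Q : M →ₗ[R] M))
include hP hQ hker

theorem invOn_comp_leftInverseSet :
    InvOn (Q ∘L ·) (P ∘L ·) (leftInverseSet T Q) (leftInverseSet T P) :=
  ⟨fun _ ↦ comp_comp_of_mem_leftInverseSet hQ (comp_eq_left_of_ker_le hP hker.le),
    fun _ ↦ comp_comp_of_mem_leftInverseSet hP (comp_eq_left_of_ker_le hQ hker.ge)⟩

theorem bijOn_comp_leftInverseSet :
    BijOn (P ∘L ·) (leftInverseSet T Q) (leftInverseSet T P) :=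
  (invOn_comp_leftInverseSet hP hQ hker).bijOn
    (fun _ ↦ comp_mem_leftInverseSet (comp_eq_left_of_ker_le hQ hker.ge))
    (fun _ ↦ comp_mem_leftInverseSet (comp_eq_left_of_ker_le hP hker.le))

end LeftInverses

theorem left_inverse_oblique_left_inverse_bijection_general
    {H K : Type*} [NormedAddCommGroup H] [InnerProductSpace ℂ H]
    [NormedAddCommGroup K] [InnerProductSpace ℂ K]
    (V W : Submodule ℂ H) [CompleteSpace W]
    (hcompl : IsCompl V Wᗮ)
    (T : H →L[ℂ] K)
    (P : H →L[ℂ] H) (hPV : ∀ f ∈ V, P f = f) (hPW : ∀ f ∈ Wᗮ, P f = 0)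
    (LW : Set (K →L[ℂ] H)) (LVW : Set (K →L[ℂ] H))
    (hLW : LW = {U : K →L[ℂ] H | U.comp T = W.subtypeL.comp W.orthogonalProjectionOnto
        ∧ LinearMap.range (U : K →ₗ[ℂ] H) = W})
    (hLVW : LVW = {U : K →L[ℂ] H | U.comp T = P ∧ LinearMap.range (U : K →ₗ[ℂ] H) = V}) :
    Set.BijOn (fun U => P.comp U) LW LVW
      ∧ (∀ A ∈ LW, (W.subtypeL.comp W.orthogonalProjectionOnto).comp (P.comp A) = A)
      ∧ (∀ B ∈ LVW, P.comp ((W.subtypeL.comp W.orthogonalProjectionOnto).comp B) = B)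
      ∧ (∀ A A' : K →L[ℂ] H, P.comp (A + A') = P.comp A + P.comp A')
      ∧ (∀ (c : ℂ) (A : K →L[ℂ] H), P.comp (c • A) = c • P.comp A) := by
  have hPproj : (P : H →ₗ[ℂ] H) = V.projection Wᗮ hcompl :=
    Submodule.eq_projection_of_eqOn hcompl hPV hPW
  have hPidem : IsIdempotentElem P := by
    rw [← isIdempotentElem_toLinearMap_iff, hPproj]
    exact Submodule.isIdempotentElem_projection hcompl
  have hkerP : LinearMap.ker (P : H →ₗ[ℂ] H) = LinearMap.ker (W.starProjection : H →ₗ[ℂ] H) := by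
    rw [hPproj, Submodule.ker_projection, Submodule.ker_starProjection]
  have hLW' : LW = leftInverseSet T W.starProjection := by
    rw [hLW, leftInverseSet, Submodule.range_starProjection]; rfl
  have hLVW' : LVW = leftInverseSet T P := by
    rw [hLVW, leftInverseSet, hPproj, Submodule.range_projection]
  subst hLW' hLVW'
  have hQidem := W.isIdempotentElem_starProjection
  obtain ⟨hleft, hright⟩ := invOn_comp_leftInverseSet (T := T) hPidem hQidem hkerP
  exact ⟨bijOn_comp_leftInverseSet hPidem hQidem hkerP, hleft, hright, comp_add P,
    fun c A ↦ comp_smul P c A⟩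

/-- Let `V`, `W` be closed subspaces of `H` with `H = V ⊕ Wᗮ`, and `T : H → K` bounded
with `ker T = Wᗮ`. Let `L_T^W` be the set of bounded left inverses `U` of `T` with
`U T = π_W` and `range U = W`, and `L_T^{V,Wᗮ}` the set of `U` with `U T = π_{V,Wᗮ}`
and `range U = V`. Then `A ↦ π_{V,Wᗮ} A` is a linear bijection from `L_T^W` onto
`L_T^{V,Wᗮ}` whose inverse is `B ↦ π_W B`. -/
theorem left_inverse_oblique_left_inverse_bijection
    {H K : Type*} [NormedAddCommGroup H] [InnerProductSpace ℂ H] [CompleteSpace H]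
    [NormedAddCommGroup K] [InnerProductSpace ℂ K] [CompleteSpace K]
    (V W : Submodule ℂ H) [CompleteSpace V] [CompleteSpace W]
    (hcompl : IsCompl V Wᗮ)
    (T : H →L[ℂ] K) (hker : LinearMap.ker (T : H →ₗ[ℂ] K) = Wᗮ)
    (P : H →L[ℂ] H) (hPV : ∀ f ∈ V, P f = f) (hPW : ∀ f ∈ Wᗮ, P f = 0)
    (LW : Set (K →L[ℂ] H)) (LVW : Set (K →L[ℂ] H))
    (hLW : LW = {U : K →L[ℂ] H | U.comp T = W.subtypeL.comp W.orthogonalProjectionOnto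
        ∧ LinearMap.range (U : K →ₗ[ℂ] H) = W})
    (hLVW : LVW = {U : K →L[ℂ] H | U.comp T = P ∧ LinearMap.range (U : K →ₗ[ℂ] H) = V}) :
    Set.BijOn (fun U => P.comp U) LW LVW
      ∧ (∀ A ∈ LW, (W.subtypeL.comp W.orthogonalProjectionOnto).comp (P.comp A) = A)
      ∧ (∀ B ∈ LVW, P.comp ((W.subtypeL.comp W.orthogonalProjectionOnto).comp B) = B)
      ∧ (∀ A A' : K →L[ℂ] H, P.comp (A + A') = P.comp A + P.comp A')
      ∧ (∀ (c : ℂ) (A : K →L[ℂ] H), P.comp (c • A) = c • P.comp A) :=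
  left_inverse_oblique_left_inverse_bijection_general V W hcompl T P hPV hPW LW LVW hLW hLVW
end

section
/- The condition H = V ⊕ W⊥ (V ∩ W⊥ = {0} and V + W⊥ = H) for closed subspaces V, W of a Hilbert space H holds if and only if H = W ⊕ V⊥. -/
/-! The projection `P` onto `V` along `Wᗮ` is a bounded idempotent, and so is its adjoint.
Taking adjoints exchanges ranges and kernels with orthogonal complements, so `P†` projects onto
`(ker P)ᗮ = W` along `(range P)ᗮ = Vᗮ`. -/

open ContinuousLinearMap Submodule

namespace ContinuousLinearMap

variable {𝕜 E : Type*} [RCLike 𝕜] [NormedAddCommGroup E] [InnerProductSpace 𝕜 E] [CompleteSpace E]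

theorem IsIdempotentElem.range_adjoint {P : E →L[𝕜] E} (hP : IsIdempotentElem P) :
    (adjoint P).range = P.kerᗮ := by
  have hP' : IsIdempotentElem (adjoint P) := hP.star
  calc (adjoint P).range
      = (1 - adjoint P).ker := LinearMap.IsIdempotentElem.range_eq_ker_one_sub hP'.toLinearMap
    _ = (adjoint (1 - P)).ker := by rw [map_sub, adjoint_one]
    _ = (1 - P).rangeᗮ := (orthogonal_range _).symm
    _ = P.kerᗮ := by
      rw [LinearMap.IsIdempotentElem.ker_eq_range_one_sub hP.toLinearMap]; rfl

theorem IsIdempotentElem.isCompl_orthogonal_ker_range {P : E →L[𝕜] E} (hP : IsIdempotentElem P) :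
    IsCompl P.kerᗮ P.rangeᗮ := by
  rw [← hP.range_adjoint, orthogonal_range]
  exact LinearMap.IsIdempotentElem.isCompl hP.star.toLinearMap

end ContinuousLinearMap

theorem IsCompl.orthogonal_swap {𝕜 E : Type*} [RCLike 𝕜] [NormedAddCommGroup E]
    [InnerProductSpace 𝕜 E] [CompleteSpace E] {V W : Submodule 𝕜 E} [CompleteSpace V]
    [CompleteSpace W] (h : IsCompl V Wᗮ) : IsCompl W Vᗮ := by
  have hVW : IsTopCompl V Wᗮ :=
    h.isTopCompl_of_isClosed (completeSpace_coe_iff_isComplete.mp ‹_›).isClosed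
      W.isClosed_orthogonal
  have := (isIdempotentElem_projectionL hVW).isCompl_orthogonal_ker_range
  rwa [ker_projectionL, range_projectionL, orthogonal_orthogonal] at this

/-- For closed subspaces `V`, `W` of a Hilbert space `H`, the direct sum decomposition
`H = V ⊕ Wᗮ` (i.e. `V` and `Wᗮ` are complementary) holds if and only if `H = W ⊕ Vᗮ`. -/
theorem isCompl_orthogonal_symm
    {H : Type*} [NormedAddCommGroup H] [InnerProductSpace ℂ H] [CompleteSpace H]
    (V W : Submodule ℂ H) [CompleteSpace V] [CompleteSpace W] :
    IsCompl V Wᗮ ↔ IsCompl W Vᗮ :=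
  ⟨IsCompl.orthogonal_swap, IsCompl.orthogonal_swap⟩
end

section
/- Let V, W be closed subspaces of H with H = V ⊕ W⊥ and let (W,w) be a fusion frame for W with analysis operator T*. A vector f̂ ∈ V satisfies the consistency condition T* f̂ = T* f if and only if f̂ = π_{V,W⊥} f. -/
/-!
Consistency says that `fhat - f` is killed by every `π_{W_i}`. Since the `W_i` lie in `W`, this
only sees `π_W (fhat - f)`, and the lower frame bound makes `T*` injective on `W`; so consistency
means `fhat - f ∈ Wᗮ`, which for `fhat ∈ V` characterises the oblique projection along `Wᗮ`.
-/

open Submodule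

section FusionFrame

variable {𝕜 E ι : Type*} [RCLike 𝕜] [NormedAddCommGroup E] [InnerProductSpace 𝕜 E]
  (Wi : ι → Submodule 𝕜 E) [∀ i, (Wi i).HasOrthogonalProjection]

theorem eq_zero_of_lower_frame_bound {w : ι → ℝ} {α : ℝ} (hα : 0 < α) {g : E}
    (hlow : α * ‖g‖ ^ 2 ≤ ∑' i, w i ^ 2 * ‖((Wi i).orthogonalProjectionOnto g : E)‖ ^ 2)
    (hg : ∀ i, (Wi i).orthogonalProjectionOnto g = 0) : g = 0 := by
  simp only [hg, ZeroMemClass.coe_zero, norm_zero] at hlow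
  have hnorm : ‖g‖ ^ 2 ≤ 0 := nonpos_of_mul_nonpos_right (by simpa using hlow) hα
  simpa using hnorm

theorem forall_orthogonalProjectionOnto_eq_zero_iff_mem_orthogonal
    {W : Submodule 𝕜 E} [W.HasOrthogonalProjection] (hWiW : ∀ i, Wi i ≤ W)
    (hinj : ∀ g ∈ W, (∀ i, (Wi i).orthogonalProjectionOnto g = 0) → g = 0) {x : E} :
    (∀ i, (Wi i).orthogonalProjectionOnto x = 0) ↔ x ∈ Wᗮ := by
  refine ⟨fun hx => ?_, fun hx i =>
    orthogonalProjectionOnto_apply_of_mem_orthogonal (orthogonal_le (hWiW i) hx)⟩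
  rw [← starProjection_apply_eq_zero_iff]
  refine hinj _ (W.starProjection_apply_mem x) fun i => ?_
  rw [orthogonalProjectionOnto_starProjection_of_le (hWiW i), hx i]

end FusionFrame

theorem LinearMap.eq_apply_iff_sub_mem_of_isCompl {R M : Type*} [Ring R] [AddCommGroup M]
    [Module R M] {V K : Submodule R M} (hVK : IsCompl V K) {P : M →ₗ[R] M}
    (hPV : ∀ x ∈ V, P x = x) (hPK : ∀ x ∈ K, P x = 0) {x y : M} (hy : y ∈ V) :
    y = P x ↔ y - x ∈ K := by
  constructor
  · obtain ⟨u, v, hu, hv, rfl⟩ := codisjoint_iff_exists_add_eq.mp hVK.codisjoint x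
    rintro rfl
    rw [map_add, hPV u hu, hPK v hv, add_zero, sub_add_cancel_left]
    exact K.neg_mem hv
  · intro hyx
    have hP := hPK _ hyx
    rwa [map_sub, hPV y hy, sub_eq_zero] at hP

theorem consistent_reconstruction_iff_oblique_projection_general
    {H : Type*} [NormedAddCommGroup H] [InnerProductSpace ℂ H]
    {I : Type*} (V W : Submodule ℂ H) [CompleteSpace W]
    (hcompl : IsCompl V Wᗮ)
    (Wi : I → Submodule ℂ H) [∀ i, CompleteSpace (Wi i)] (hWiW : ∀ i, Wi i ≤ W)
    (w : I → ℝ) (hw : ∀ i, 0 < w i)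
    (α β : ℝ) (hα : 0 < α)
    (hframe : ∀ f ∈ W,
      Summable (fun i => (w i) ^ 2 * ‖(Submodule.orthogonalProjectionOnto (Wi i) f : H)‖ ^ 2)
      ∧ α * ‖f‖ ^ 2 ≤ ∑' i, (w i) ^ 2 * ‖(Submodule.orthogonalProjectionOnto (Wi i) f : H)‖ ^ 2
      ∧ ∑' i, (w i) ^ 2 * ‖(Submodule.orthogonalProjectionOnto (Wi i) f : H)‖ ^ 2 ≤ β * ‖f‖ ^ 2)
    (P : H →L[ℂ] H) (hPV : ∀ f ∈ V, P f = f) (hPW : ∀ f ∈ Wᗮ, P f = 0)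
    (f fhat : H) (hfhat : fhat ∈ V) :
    (∀ i, w i • (Submodule.orthogonalProjectionOnto (Wi i) fhat : H)
        = w i • (Submodule.orthogonalProjectionOnto (Wi i) f : H))
      ↔ fhat = P f := by
  have hconsistent : ∀ i, w i • ((Wi i).orthogonalProjectionOnto fhat : H)
        = w i • ((Wi i).orthogonalProjectionOnto f : H)
      ↔ (Wi i).orthogonalProjectionOnto (fhat - f) = 0 := fun i => by
    rw [smul_right_inj (hw i).ne', SetLike.coe_eq_coe, map_sub, sub_eq_zero]
  have hinj : ∀ g ∈ W, (∀ i, (Wi i).orthogonalProjectionOnto g = 0) → g = 0 :=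
    fun g hg => eq_zero_of_lower_frame_bound Wi hα (hframe g hg).2.1
  rw [forall_congr' hconsistent,
    forall_orthogonalProjectionOnto_eq_zero_iff_mem_orthogonal Wi hWiW hinj]
  exact (LinearMap.eq_apply_iff_sub_mem_of_isCompl (P := (P : H →ₗ[ℂ] H)) hcompl hPV hPW
    hfhat).symm

/-- Let `V`, `W` be closed subspaces of `H` with `H = V ⊕ Wᗮ` and `(W_i, w_i)` a fusion
frame for `W` with analysis operator `T* f = (w_i π_{W_i} f)_i`. A vector `f̂ ∈ V`
satisfies the consistency condition `T* f̂ = T* f` iff `f̂ = π_{V,Wᗮ} f`. -/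
theorem consistent_reconstruction_iff_oblique_projection
    {H : Type*} [NormedAddCommGroup H] [InnerProductSpace ℂ H] [CompleteSpace H]
    {I : Type*} (V W : Submodule ℂ H) [CompleteSpace V] [CompleteSpace W]
    (hcompl : IsCompl V Wᗮ)
    (Wi : I → Submodule ℂ H) [∀ i, CompleteSpace (Wi i)] (hWiW : ∀ i, Wi i ≤ W)
    (w : I → ℝ) (hw : ∀ i, 0 < w i)
    (α β : ℝ) (hα : 0 < α) (hαβ : α ≤ β)
    (hframe : ∀ f ∈ W,
      Summable (fun i => (w i) ^ 2 * ‖(Submodule.orthogonalProjectionOnto (Wi i) f : H)‖ ^ 2)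
      ∧ α * ‖f‖ ^ 2 ≤ ∑' i, (w i) ^ 2 * ‖(Submodule.orthogonalProjectionOnto (Wi i) f : H)‖ ^ 2
      ∧ ∑' i, (w i) ^ 2 * ‖(Submodule.orthogonalProjectionOnto (Wi i) f : H)‖ ^ 2 ≤ β * ‖f‖ ^ 2)
    (P : H →L[ℂ] H) (hPV : ∀ f ∈ V, P f = f) (hPW : ∀ f ∈ Wᗮ, P f = 0)
    (f fhat : H) (hfhat : fhat ∈ V) :
    (∀ i, w i • (Submodule.orthogonalProjectionOnto (Wi i) fhat : H)
        = w i • (Submodule.orthogonalProjectionOnto (Wi i) f : H))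
      ↔ fhat = P f :=
  consistent_reconstruction_iff_oblique_projection_general V W hcompl Wi hWiW w hw α β hα hframe P
    hPV hPW f fhat hfhat
end

section
/- Let V, W be closed subspaces of H with H = V ⊕ W⊥, let (W,w) be a Bessel fusion sequence for W, (V,v) a Bessel fusion sequence for V, and Q ∈ L(K_W, K_V). Then T_{V,v} Q T*_{W,w} f = f for all f ∈ V if and only if T_{V,v} Q T*_{W,w} = π_{V,W⊥} on all of H. -/
open scoped InnerProductSpace


set_option synthInstance.maxHeartbeats 1000000 in
set_option maxHeartbeats 1000000 in
/-- Let `V`, `W` be closed subspaces of `H` with `H = V ⊕ Wᗮ`, `(W_i, w_i)` a Bessel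
fusion sequence for `W` with synthesis operator `T_W : ⊕ᵢ W_i → H`,
`(V_i, v_i)` a Bessel fusion sequence for `V` with synthesis operator `T_V`, and
`Q : K_W → K_V` bounded. Then `T_V Q T_W* f = f` for all `f ∈ V` iff
`T_V Q T_W* = π_{V,Wᗮ}` on all of `H`. -/
theorem dual_on_V_iff_oblique_projection
    {H : Type*} [NormedAddCommGroup H] [InnerProductSpace ℂ H] [CompleteSpace H]
    {I : Type*} (V W : Submodule ℂ H) [CompleteSpace V] [CompleteSpace W]
    (hcompl : IsCompl V Wᗮ)
    (Wi Vi : I → Submodule ℂ H) [∀ i, CompleteSpace (Wi i)] [∀ i, CompleteSpace (Vi i)]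
    (hWiW : ∀ i, Wi i ≤ W) (hViV : ∀ i, Vi i ≤ V)
    (w v : I → ℝ) (hw : ∀ i, 0 < w i) (hv : ∀ i, 0 < v i)
    (TW : lp (fun i => Wi i) 2 →L[ℂ] H)
    (hTW : ∀ c, HasSum (fun i => w i • (c i : H)) (TW c))
    (TV : lp (fun i => Vi i) 2 →L[ℂ] H)
    (hTV : ∀ c, HasSum (fun i => v i • (c i : H)) (TV c))
    (Q : lp (fun i => Wi i) 2 →L[ℂ] lp (fun i => Vi i) 2)
    (P : H →L[ℂ] H) (hPV : ∀ f ∈ V, P f = f) (hPW : ∀ f ∈ Wᗮ, P f = 0) :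
    (∀ f ∈ V, TV (Q (TW.adjoint f)) = f) ↔ (∀ f : H, TV (Q (TW.adjoint f)) = P f) := by
  -- range of TW lies in W
  have hWclosed : IsClosed (W : Set H) := (completeSpace_coe_iff_isComplete.mp inferInstance).isClosed
  have hrange : ∀ c : lp (fun i => Wi i) 2, TW c ∈ W := by
    intro c
    refine hWclosed.mem_of_tendsto (hTW c) (Filter.Eventually.of_forall ?_)
    intro s
    exact Submodule.sum_mem W fun i _ => Submodule.smul_mem W _ (hWiW i (c i).2)
  -- TW.adjoint vanishes on Wᗮ
  have hadj0 : ∀ q ∈ Wᗮ, TW.adjoint q = 0 := by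
    intro q hq
    have h := ContinuousLinearMap.adjoint_inner_left TW (TW.adjoint q) q
    rw [Submodule.mem_orthogonal] at hq
    have hz : ⟪TW.adjoint q, TW.adjoint q⟫_ℂ = 0 := by
      rw [h]
      have := hq (TW (TW.adjoint q)) (hrange _)
      rw [← inner_conj_symm, this, map_zero]
    exact inner_self_eq_zero.mp hz
  constructor
  · intro hV f
    obtain ⟨p, hp, q, hq, hpq⟩ := Submodule.mem_sup.mp
      (by rw [hcompl.sup_eq_top]; trivial : f ∈ V ⊔ Wᗮ)
    have hPf : P f = p := by
      rw [← hpq, map_add, hPV p hp, hPW q hq, add_zero]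
    rw [hPf, ← hpq, map_add, hadj0 q hq, add_zero, hV p hp]
  · intro hall f hf
    rw [hall f, hPV f hf]
end

section
/- Let V, W be closed subspaces of H with H = V ⊕ W⊥, (W,w) and (V,v) Bessel fusion sequences, Q ∈ L(K_W,K_V). If T_{V,v} Q T*_{W,w} = π_{V,W⊥}, then T*_{W,w}|_V is injective, T_{V,v}Q is surjective, and (T*_{W,w} T_{V,v} Q)² = T*_{W,w} T_{V,v} Q (i.e., T*_{W,w} T_{V,v} Q is idempotent). -/
/-- If `T_V Q T_W* = π_{V,Wᗮ}` for Bessel fusion sequences `(W_i,w_i)` for `W` and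
`(V_i,v_i)` for `V`, then `T_W*` restricted to `V` is injective, `T_V Q` is surjective
onto `V` (i.e. `Im(T_V Q) = V`), and `T_W* T_V Q` is idempotent. -/
theorem oblique_dual_implies_injective_surjective_idempotent
    {H : Type*} [NormedAddCommGroup H] [InnerProductSpace ℂ H] [CompleteSpace H]
    {I : Type*} (V W : Submodule ℂ H) [CompleteSpace V] [CompleteSpace W]
    (hcompl : IsCompl V Wᗮ)
    (Wi Vi : I → Submodule ℂ H) [∀ i, CompleteSpace (Wi i)] [∀ i, CompleteSpace (Vi i)]
    (hWiW : ∀ i, Wi i ≤ W) (hViV : ∀ i, Vi i ≤ V)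
    (w v : I → ℝ) (hw : ∀ i, 0 < w i) (hv : ∀ i, 0 < v i)
    (TW : lp (fun i => Wi i) 2 →L[ℂ] H)
    (hTW : ∀ c, HasSum (fun i => w i • (c i : H)) (TW c))
    (TV : lp (fun i => Vi i) 2 →L[ℂ] H)
    (hTV : ∀ c, HasSum (fun i => v i • (c i : H)) (TV c))
    (Q : lp (fun i => Wi i) 2 →L[ℂ] lp (fun i => Vi i) 2)
    (P : H →L[ℂ] H) (hPV : ∀ f ∈ V, P f = f) (hPW : ∀ f ∈ Wᗮ, P f = 0)
    (hdual : ∀ f : H, TV (Q (TW.adjoint f)) = P f) :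
    Set.InjOn TW.adjoint (V : Set H)
      ∧ LinearMap.range (TV.comp Q).toLinearMap = V
      ∧ (TW.adjoint.comp (TV.comp Q)).comp (TW.adjoint.comp (TV.comp Q))
          = TW.adjoint.comp (TV.comp Q) := by
  -- range of TV lies in V
  have hVclosed : IsClosed (V : Set H) :=
    (completeSpace_coe_iff_isComplete.mp ‹CompleteSpace V›).isClosed
  have hrange : ∀ c, TV c ∈ V := by
    intro c
    refine hVclosed.mem_of_tendsto (hTV c) ?_
    filter_upwards with s
    exact Submodule.sum_mem V fun i _ => V.smul_mem _ (hViV i (c i).2)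
  refine ⟨?_, ?_, ?_⟩
  · intro f hf g hg hfg
    have h1 := hdual f
    have h2 := hdual g
    rw [hfg, h2, hPV f hf, hPV g hg] at h1
    exact h1.symm
  · apply le_antisymm
    · rintro x ⟨c, rfl⟩
      exact hrange (Q c)
    · intro f hf
      exact ⟨TW.adjoint f, by simp [hdual f, hPV f hf]⟩
  · ext x
    simp only [ContinuousLinearMap.coe_comp', Function.comp_apply]
    rw [hdual (TV (Q x)), hPV _ (hrange (Q x))]
end

section
/- Let V, W be closed subspaces of H with H = V ⊕ W⊥, (W,w), (V,v) Bessel fusion sequences for W, V, and Q ∈ L(K_W,K_V) with T*_{W,w}|_V injective, T_{V,v}Q surjective, and (T*_{W,w} T_{V,v} Q)² = T*_{W,w} T_{V,v} Q. Then T_{V,v} Q T*_{W,w} f = f for all f ∈ V. -/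
theorem Set.InjOn.leftInvOn_of_idempotent {α β : Type*} {A : α → β} {B : β → α} {s : Set α}
    (hA : Set.InjOn A s) (hB : Set.range B = s) (hAB : ∀ y, A (B (A (B y))) = A (B y)) :
    Set.LeftInvOn B A s := by
  subst hB
  rintro _ ⟨y, rfl⟩
  exact hA (Set.mem_range_self _) (Set.mem_range_self _) (hAB y)

theorem injective_surjective_idempotent_implies_dual_on_V_general
    {H : Type*} [NormedAddCommGroup H] [InnerProductSpace ℂ H] [CompleteSpace H]
    {I : Type*} (V : Submodule ℂ H)
    (Wi Vi : I → Submodule ℂ H) [∀ i, CompleteSpace (Wi i)]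
    (TW : lp (fun i => Wi i) 2 →L[ℂ] H)
    (TV : lp (fun i => Vi i) 2 →L[ℂ] H)
    (Q : lp (fun i => Wi i) 2 →L[ℂ] lp (fun i => Vi i) 2)
    (hinj : Set.InjOn TW.adjoint (V : Set H))
    (hsurj : LinearMap.range (TV.comp Q : lp (fun i => Wi i) 2 →ₗ[ℂ] H) = V)
    (hidem : (TW.adjoint.comp (TV.comp Q)).comp (TW.adjoint.comp (TV.comp Q))
        = TW.adjoint.comp (TV.comp Q)) :
    ∀ f ∈ V, TV (Q (TW.adjoint f)) = f := by
  have hrange : Set.range (TV ∘ Q) = V := by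
    rw [← hsurj, LinearMap.coe_range]
    rfl
  exact hinj.leftInvOn_of_idempotent hrange (DFunLike.congr_fun hidem)

/-- Conversely: if `T_W*|_V` is injective, `Im(T_V Q) = V`, and `T_W* T_V Q` is
idempotent, then `T_V Q T_W* f = f` for all `f ∈ V`. -/
theorem injective_surjective_idempotent_implies_dual_on_V
    {H : Type*} [NormedAddCommGroup H] [InnerProductSpace ℂ H] [CompleteSpace H]
    {I : Type*} (V W : Submodule ℂ H) [CompleteSpace V] [CompleteSpace W]
    (hcompl : IsCompl V Wᗮ)
    (Wi Vi : I → Submodule ℂ H) [∀ i, CompleteSpace (Wi i)] [∀ i, CompleteSpace (Vi i)]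
    (hWiW : ∀ i, Wi i ≤ W) (hViV : ∀ i, Vi i ≤ V)
    (w v : I → ℝ) (hw : ∀ i, 0 < w i) (hv : ∀ i, 0 < v i)
    (TW : lp (fun i => Wi i) 2 →L[ℂ] H)
    (hTW : ∀ c, HasSum (fun i => w i • (c i : H)) (TW c))
    (TV : lp (fun i => Vi i) 2 →L[ℂ] H)
    (hTV : ∀ c, HasSum (fun i => v i • (c i : H)) (TV c))
    (Q : lp (fun i => Wi i) 2 →L[ℂ] lp (fun i => Vi i) 2)
    (hinj : Set.InjOn TW.adjoint (V : Set H))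
    (hsurj : LinearMap.range (TV.comp Q : lp (fun i => Wi i) 2 →ₗ[ℂ] H) = V)
    (hidem : (TW.adjoint.comp (TV.comp Q)).comp (TW.adjoint.comp (TV.comp Q))
        = TW.adjoint.comp (TV.comp Q)) :
    ∀ f ∈ V, TV (Q (TW.adjoint f)) = f :=
  injective_surjective_idempotent_implies_dual_on_V_general V Wi Vi TW TV Q hinj hsurj hidem
end

section
/- If (W,w) and (V,v) are Bessel fusion sequences for W and V respectively and T_{V,v} Q T*_{W,w} = π_{V,W⊥} for some bounded Q, then (V,v) is automatically a fusion frame for V and (W,w) a fusion frame for W; equivalently, Im(T_{V,v}) = V and Im(T_{W,w}) = W. -/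
/-! Every `f ∈ V` is `π_{V,Wᗮ} f = T_V (Q T_W* f)`, so `V ⊆ Im T_V`. Taking adjoints,
`T_W Q* T_V* = π_{V,Wᗮ}*`, and `π_{V,Wᗮ}*` is the identity on `W` because `V + Wᗮ = H`;
hence `W ⊆ Im T_W`. The reverse inclusions hold because `V` and `W` are closed and contain
every term of the series defining the synthesis operators. -/

open ContinuousLinearMap
open scoped InnerProduct

theorem LinearMap.range_le_of_hasSum {ι R M N : Type*} [Semiring R] [AddCommMonoid M]
    [Module R M] [AddCommMonoid N] [Module R N] [TopologicalSpace N] [T2Space N]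
    {S : Submodule R N} (hS : IsClosed (S : Set N)) (T : M →ₗ[R] N) (f : M → ι → N)
    (hfS : ∀ c i, f c i ∈ S) (hT : ∀ c, HasSum (f c) (T c)) :
    LinearMap.range T ≤ S := by
  rintro _ ⟨c, rfl⟩
  rw [← (hT c).tsum_eq]
  exact tsum_mem hS (hfS c)

section Adjoint

variable {𝕜 E F G : Type*} [RCLike 𝕜]
  [NormedAddCommGroup E] [InnerProductSpace 𝕜 E] [CompleteSpace E]
  [NormedAddCommGroup F] [InnerProductSpace 𝕜 F] [CompleteSpace F]
  [NormedAddCommGroup G] [InnerProductSpace 𝕜 G] [CompleteSpace G]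

theorem ContinuousLinearMap.adjoint_apply_eq_self_of_codisjoint {P : E →L[𝕜] E}
    {V W : Submodule 𝕜 E} (hVW : Codisjoint V Wᗮ) (hPV : ∀ f ∈ V, P f = f)
    (hPW : ∀ f ∈ Wᗮ, P f = 0) {f : E} (hf : f ∈ W) : (P†) f = f := by
  refine ext_inner_right 𝕜 fun g => ?_
  have hg : g ∈ V ⊔ Wᗮ := hVW.eq_top ▸ Submodule.mem_top
  obtain ⟨a, ha, b, hb, rfl⟩ := Submodule.mem_sup.mp hg
  rw [adjoint_inner_left, map_add, hPV a ha, hPW b hb, add_zero, inner_add_right,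
    Submodule.inner_right_of_mem_orthogonal hf hb, add_zero]

theorem ContinuousLinearMap.apply_adjoint_apply_adjoint_eq {A : F →L[𝕜] E} {B : G →L[𝕜] F}
    {C : G →L[𝕜] E} {P : E →L[𝕜] E} (h : ∀ f, A (B ((C†) f)) = P f) (f : E) :
    C ((B†) ((A†) f)) = (P†) f := by
  have hABC : A ∘L B ∘L C† = P := ext h
  rw [← hABC, adjoint_comp, adjoint_comp, adjoint_adjoint]
  rfl

end Adjoint

theorem bessel_oblique_dual_implies_fusion_frames_general
    {H : Type*} [NormedAddCommGroup H] [InnerProductSpace ℂ H] [CompleteSpace H]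
    {I : Type*} (V W : Submodule ℂ H) [CompleteSpace V] [CompleteSpace W]
    (hcompl : IsCompl V Wᗮ)
    (Wi Vi : I → Submodule ℂ H) [∀ i, CompleteSpace (Wi i)] [∀ i, CompleteSpace (Vi i)]
    (hWiW : ∀ i, Wi i ≤ W) (hViV : ∀ i, Vi i ≤ V)
    (w v : I → ℝ)
    (TW : lp (fun i => Wi i) 2 →L[ℂ] H)
    (hTW : ∀ c, HasSum (fun i => w i • (c i : H)) (TW c))
    (TV : lp (fun i => Vi i) 2 →L[ℂ] H)
    (hTV : ∀ c, HasSum (fun i => v i • (c i : H)) (TV c))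
    (Q : lp (fun i => Wi i) 2 →L[ℂ] lp (fun i => Vi i) 2)
    (P : H →L[ℂ] H) (hPV : ∀ f ∈ V, P f = f) (hPW : ∀ f ∈ Wᗮ, P f = 0)
    (hdual : ∀ f : H, TV (Q (TW.adjoint f)) = P f) :
    LinearMap.range (TV : lp (fun i => Vi i) 2 →ₗ[ℂ] H) = V ∧ LinearMap.range (TW : lp (fun i => Wi i) 2 →ₗ[ℂ] H) = W := by
  have hVclosed : IsClosed (V : Set H) := (completeSpace_coe_iff_isComplete.mp ‹_›).isClosed
  have hWclosed : IsClosed (W : Set H) := (completeSpace_coe_iff_isComplete.mp ‹_›).isClosed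
  constructor
  · refine le_antisymm (LinearMap.range_le_of_hasSum hVclosed _ _
      (fun c i => V.smul_mem _ (hViV i (c i).2)) hTV) fun f hf => ?_
    exact ⟨Q ((TW†) f), (hdual f).trans (hPV f hf)⟩
  · refine le_antisymm (LinearMap.range_le_of_hasSum hWclosed _ _
      (fun c i => W.smul_mem _ (hWiW i (c i).2)) hTW) fun f hf => ?_
    refine ⟨(Q†) ((TV†) f), ?_⟩
    exact (apply_adjoint_apply_adjoint_eq hdual f).trans
      (adjoint_apply_eq_self_of_codisjoint hcompl.codisjoint hPV hPW hf)

/-- If `(W_i,w_i)` and `(V_i,v_i)` are Bessel fusion sequences for `W` and `V` and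
`T_V Q T_W* = π_{V,Wᗮ}` for some bounded `Q`, then they are automatically fusion
frames, i.e. `Im(T_V) = V` and `Im(T_W) = W`. -/
theorem bessel_oblique_dual_implies_fusion_frames
    {H : Type*} [NormedAddCommGroup H] [InnerProductSpace ℂ H] [CompleteSpace H]
    {I : Type*} (V W : Submodule ℂ H) [CompleteSpace V] [CompleteSpace W]
    (hcompl : IsCompl V Wᗮ)
    (Wi Vi : I → Submodule ℂ H) [∀ i, CompleteSpace (Wi i)] [∀ i, CompleteSpace (Vi i)]
    (hWiW : ∀ i, Wi i ≤ W) (hViV : ∀ i, Vi i ≤ V)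
    (w v : I → ℝ) (hw : ∀ i, 0 < w i) (hv : ∀ i, 0 < v i)
    (TW : lp (fun i => Wi i) 2 →L[ℂ] H)
    (hTW : ∀ c, HasSum (fun i => w i • (c i : H)) (TW c))
    (TV : lp (fun i => Vi i) 2 →L[ℂ] H)
    (hTV : ∀ c, HasSum (fun i => v i • (c i : H)) (TV c))
    (Q : lp (fun i => Wi i) 2 →L[ℂ] lp (fun i => Vi i) 2)
    (P : H →L[ℂ] H) (hPV : ∀ f ∈ V, P f = f) (hPW : ∀ f ∈ Wᗮ, P f = 0)
    (hdual : ∀ f : H, TV (Q (TW.adjoint f)) = P f) :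
    LinearMap.range (TV : lp (fun i => Vi i) 2 →ₗ[ℂ] H) = V ∧ LinearMap.range (TW : lp (fun i => Wi i) 2 →ₗ[ℂ] H) = W :=
  bessel_oblique_dual_implies_fusion_frames_general V W hcompl Wi Vi hWiW hViV w v TW hTW TV hTV Q P
    hPV hPW hdual
end

section
/- If A : H → K is a bounded operator between Hilbert spaces, then there exists a frame F = {f_i} for H and a frame G = {g_i} for K with the same index set such that A = T_G T_F*, i.e., A f = Σ_i ⟨f, f_i⟩ g_i for all f ∈ H. Moreover F and G can be chosen with frame bounds 1, 2 and 1, 1+‖A‖² respectively. -/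
open scoped InnerProductSpace

section Aux

private lemma countable_of_orthonormal' {E : Type*} [NormedAddCommGroup E]
    [InnerProductSpace ℂ E] [TopologicalSpace.SeparableSpace E] {ι : Type*} {v : ι → E}
    (hv : Orthonormal ℂ v) : Countable ι := by
  have hd : Pairwise fun i j : ι => (1 : ℝ) ≤ dist (v i) (v j) := by
    intro i j hij
    have h0 : ⟪v i, v j⟫_ℂ = 0 := hv.2 hij
    have h2 : ‖v i - v j‖ ^ 2 = 2 := by
      rw [@norm_sub_sq ℂ]
      simp [h0, hv.1 i, hv.1 j]
      norm_num
    have hnn : (0 : ℝ) ≤ ‖v i - v j‖ := norm_nonneg _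
    rw [dist_eq_norm]
    nlinarith
  have hpd : (Set.univ : Set ι).PairwiseDisjoint fun i => Metric.ball (v i) (2⁻¹ : ℝ) := by
    intro i _ j _ hij
    refine Set.disjoint_left.2 fun x hxi hxj => ?_
    have h1 := hd hij
    have h2 : dist (v i) (v j) ≤ dist (v i) x + dist x (v j) := dist_triangle _ _ _
    rw [Metric.mem_ball, dist_comm] at hxi
    rw [Metric.mem_ball] at hxj
    linarith
  have hc : (Set.univ : Set ι).Countable :=
    hpd.countable_of_isOpen (fun i _ => Metric.isOpen_ball)
      (fun i _ => Metric.nonempty_ball.2 (by norm_num))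
  exact Set.countable_univ_iff.mp hc

private lemma hasSum_sum_elim' {α β M : Type*} [AddCommMonoid M] [TopologicalSpace M]
    [ContinuousAdd M] {f : α → M} {g : β → M} {a b : M} (hf : HasSum f a) (hg : HasSum g b) :
    HasSum (Sum.elim f g) (a + b) := by
  have h1 : HasSum ((Sum.elim f g) ∘ ((↑) : Set.range (Sum.inl : α → α ⊕ β) → α ⊕ β)) a :=
    Sum.inl_injective.hasSum_range_iff.mpr hf
  have h2 : HasSum ((Sum.elim f g) ∘ ((↑) : Set.range (Sum.inr : β → α ⊕ β) → α ⊕ β)) b :=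
    Sum.inr_injective.hasSum_range_iff.mpr hg
  exact h1.add_isCompl Set.isCompl_range_inl_range_inr h2

private lemma parseval' {E : Type*} [NormedAddCommGroup E] [InnerProductSpace ℂ E]
    {ι : Type*} (b : HilbertBasis ι ℂ E) (f : E) :
    HasSum (fun i => ‖⟪b i, f⟫_ℂ‖ ^ 2) (‖f‖ ^ 2) := by
  have h := (b.hasSum_inner_mul_inner f f).mapL Complex.reCLM
  have key : ∀ i, Complex.reCLM (⟪f, b i⟫_ℂ * ⟪b i, f⟫_ℂ) = ‖⟪b i, f⟫_ℂ‖ ^ 2 := by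
    intro i
    have hc : ⟪f, b i⟫_ℂ = starRingEnd ℂ ⟪b i, f⟫_ℂ := (inner_conj_symm f (b i)).symm
    rw [hc, RCLike.conj_mul]
    simp [← Complex.ofReal_pow]
  have hfin : Complex.reCLM ⟪f, f⟫_ℂ = ‖f‖ ^ 2 := by
    simpa using inner_self_eq_norm_sq (𝕜 := ℂ) f
  rw [funext key, hfin] at h
  exact h

end Aux

/-- If `A : H → K` is a bounded operator between separable Hilbert spaces, then there
exist a frame `{f_i}` for `H` and a frame `{g_i}` for `K` over the same (countable)
index set with `A f = Σᵢ ⟨f, f_i⟩ g_i` for all `f`, and the frames can be chosen with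
frame bounds `1, 2` and `1, 1 + ‖A‖²`, respectively. -/
theorem exists_frames_factoring_operator
    {H K : Type} [NormedAddCommGroup H] [InnerProductSpace ℂ H] [CompleteSpace H]
    [NormedAddCommGroup K] [InnerProductSpace ℂ K] [CompleteSpace K]
    [TopologicalSpace.SeparableSpace H] [TopologicalSpace.SeparableSpace K]
    (A : H →L[ℂ] K) :
    ∃ (I : Type) (_ : Countable I) (F : I → H) (G : I → K),
      (∀ f : H, Summable (fun i => ‖⟪F i, f⟫_ℂ‖ ^ 2)
        ∧ 1 * ‖f‖ ^ 2 ≤ ∑' i, ‖⟪F i, f⟫_ℂ‖ ^ 2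
        ∧ ∑' i, ‖⟪F i, f⟫_ℂ‖ ^ 2 ≤ 2 * ‖f‖ ^ 2)
      ∧ (∀ g : K, Summable (fun i => ‖⟪G i, g⟫_ℂ‖ ^ 2)
        ∧ 1 * ‖g‖ ^ 2 ≤ ∑' i, ‖⟪G i, g⟫_ℂ‖ ^ 2
        ∧ ∑' i, ‖⟪G i, g⟫_ℂ‖ ^ 2 ≤ (1 + ‖A‖ ^ 2) * ‖g‖ ^ 2)
      ∧ (∀ f : H, HasSum (fun i => ⟪F i, f⟫_ℂ • G i) (A f)) := by
  obtain ⟨wH, bH, hbH⟩ := exists_hilbertBasis ℂ H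
  obtain ⟨wK, bK, hbK⟩ := exists_hilbertBasis ℂ K
  have : Countable wH := countable_of_orthonormal' bH.orthonormal
  have : Countable wK := countable_of_orthonormal' bK.orthonormal
  set F : wH ⊕ wK → H := Sum.elim (fun i => bH i) (fun _ => 0) with hF
  set G : wH ⊕ wK → K := Sum.elim (fun i => A (bH i)) (fun j => bK j) with hG
  refine ⟨wH ⊕ wK, inferInstance, F, G, ?_, ?_, ?_⟩
  · intro f
    have hsum : HasSum (fun i => ‖⟪F i, f⟫_ℂ‖ ^ 2) (‖f‖ ^ 2 + 0) := by
      have h := hasSum_sum_elim' (parseval' bH f)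
        (hasSum_zero : HasSum (fun _ : wK => (0 : ℝ)) 0)
      have heq : (fun i => ‖⟪F i, f⟫_ℂ‖ ^ 2)
          = Sum.elim (fun i : wH => ‖⟪bH i, f⟫_ℂ‖ ^ 2) (fun _ : wK => (0 : ℝ)) := by
        funext i
        cases i with
        | inl i => simp [hF]
        | inr j => simp [hF]
      rw [heq]
      exact h
    refine ⟨hsum.summable, ?_, ?_⟩
    · rw [hsum.tsum_eq]
      nlinarith [sq_nonneg ‖f‖]
    · rw [hsum.tsum_eq]
      nlinarith [sq_nonneg ‖f‖]
  · intro g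
    set B := ContinuousLinearMap.adjoint A with hB
    have hBnorm : ‖B‖ = ‖A‖ := ContinuousLinearMap.adjoint.norm_map A
    have hsum : HasSum (fun i => ‖⟪G i, g⟫_ℂ‖ ^ 2) (‖B g‖ ^ 2 + ‖g‖ ^ 2) := by
      have h := hasSum_sum_elim' (parseval' bH (B g)) (parseval' bK g)
      have heq : (fun i => ‖⟪G i, g⟫_ℂ‖ ^ 2)
          = Sum.elim (fun i : wH => ‖⟪bH i, B g⟫_ℂ‖ ^ 2)
            (fun j : wK => ‖⟪bK j, g⟫_ℂ‖ ^ 2) := by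
        funext i
        cases i with
        | inl i =>
          simp only [hG, Sum.elim_inl]
          rw [← ContinuousLinearMap.adjoint_inner_right A (bH i) g]
        | inr j => simp [hG]
      rw [heq]
      exact h
    have hBle : ‖B g‖ ≤ ‖A‖ * ‖g‖ := by
      have := B.le_opNorm g
      rwa [hBnorm] at this
    refine ⟨hsum.summable, ?_, ?_⟩
    · rw [hsum.tsum_eq]
      nlinarith [sq_nonneg ‖B g‖]
    · rw [hsum.tsum_eq]
      nlinarith [norm_nonneg (B g), norm_nonneg g, norm_nonneg A]
  · intro f
    have hrec := bH.hasSum_repr f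
    have h' := hrec.mapL A
    have hsum : HasSum (fun i : wH => ⟪bH i, f⟫_ℂ • A (bH i)) (A f) := by
      have heq : (fun i : wH => A ((bH.repr f) i • bH i))
          = fun i : wH => ⟪bH i, f⟫_ℂ • A (bH i) := by
        funext i
        rw [map_smul, bH.repr_apply_apply]
      rwa [heq] at h'
    have h0 : HasSum (fun j : wK => ⟪(0 : H), f⟫_ℂ • bK j) 0 := by
      simpa using (hasSum_zero : HasSum (fun _ : wK => (0 : K)) 0)
    have h := hasSum_sum_elim' hsum h0
    have heq : (fun i => ⟪F i, f⟫_ℂ • G i)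
        = Sum.elim (fun i : wH => ⟪bH i, f⟫_ℂ • A (bH i))
          (fun j : wK => ⟪(0 : H), f⟫_ℂ • bK j) := by
      funext i
      cases i with
      | inl i => simp [hF, hG]
      | inr j => simp [hF, hG]
    rw [heq]
    simpa using h
end

section
/- Let V, W be closed subspaces of H with H = V ⊕ W⊥, let (W,w) be a fusion frame for W and (V,v) a fusion frame for V. Then the operator T_{V,v}(T*_{W,w} T_{V,v})† T*_{W,w} equals π_{V,W⊥}; consequently (V,v) is a (T*_{W,w}T_{V,v})†-oblique dual fusion frame of (W,w) on V. -/
/-!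
Write `S = B† A`. Since `(range B)ᗮ = ker B†` meets `range A` trivially, `ker S = ker A`, so the
identity `S G S = S` alone forces `A G B† = id` on `range A`; and `A G B†` vanishes on
`(range B)ᗮ = ker B†`. Two operators agreeing on the complementary subspaces `range A` and
`(range B)ᗮ` coincide, so `A G B†` is the oblique projection onto `range A` along `(range B)ᗮ`.
-/

namespace ContinuousLinearMap

open scoped InnerProduct

variable {𝕜 E F H : Type*} [RCLike 𝕜]
  [NormedAddCommGroup E] [InnerProductSpace 𝕜 E]
  [NormedAddCommGroup F] [InnerProductSpace 𝕜 F] [CompleteSpace F]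
  [NormedAddCommGroup H] [InnerProductSpace 𝕜 H] [CompleteSpace H]

theorem adjoint_apply_eq_zero_of_mem_orthogonal_range (B : F →L[𝕜] H) {x : H}
    (hx : x ∈ B.rangeᗮ) : (B†) x = 0 :=
  LinearMap.mem_ker.mp (B.orthogonal_range ▸ hx)

theorem eq_zero_of_mem_range_of_adjoint_apply_eq_zero (A : E →L[𝕜] H) (B : F →L[𝕜] H)
    (hAB : Disjoint A.range B.rangeᗮ) {x : H} (hxA : x ∈ A.range) (hx : (B†) x = 0) : x = 0 :=
  Submodule.disjoint_def.mp hAB x hxA (B.orthogonal_range ▸ hx)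

theorem apply_apply_adjoint_eq_self_of_mem_range (A : E →L[𝕜] H) (B : F →L[𝕜] H) (G : F →L[𝕜] E)
    (hAB : Disjoint A.range B.rangeᗮ)
    (hG : ((B† ∘L A) ∘L G) ∘L (B† ∘L A) = B† ∘L A) {x : H} (hx : x ∈ A.range) :
    A (G ((B†) x)) = x := by
  obtain ⟨c, rfl⟩ := hx
  have hS : (B†) (A (G ((B†) (A c)))) = (B†) (A c) := DFunLike.congr_fun hG c
  have hdiff : A (G ((B†) (A c)) - c) = 0 :=
    eq_zero_of_mem_range_of_adjoint_apply_eq_zero A B hAB (LinearMap.mem_range_self _ _)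
      (by rw [map_sub, map_sub, hS, sub_self])
  rwa [map_sub, sub_eq_zero] at hdiff

theorem comp_comp_adjoint_eq_of_isCompl (A : E →L[𝕜] H) (B : F →L[𝕜] H) (G : F →L[𝕜] E)
    (hAB : IsCompl A.range B.rangeᗮ)
    (hG : ((B† ∘L A) ∘L G) ∘L (B† ∘L A) = B† ∘L A)
    (P : H →L[𝕜] H) (hPA : ∀ x ∈ A.range, P x = x) (hPB : ∀ x ∈ B.rangeᗮ, P x = 0) :
    A ∘L G ∘L B† = P :=
  LinearMap.ext_on_codisjoint hAB.codisjoint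
    (fun x hx => (apply_apply_adjoint_eq_self_of_mem_range A B G hAB.disjoint hG hx).trans (hPA x hx).symm)
    (fun x hx => by
      simp [adjoint_apply_eq_zero_of_mem_orthogonal_range B hx, hPB x hx])

end ContinuousLinearMap

theorem pseudoinverse_gives_oblique_dual_general
    {H : Type*} [NormedAddCommGroup H] [InnerProductSpace ℂ H] [CompleteSpace H]
    {I : Type*} (V W : Submodule ℂ H)
    (hcompl : IsCompl V Wᗮ)
    (Wi Vi : I → Submodule ℂ H) [∀ i, CompleteSpace (Wi i)] [∀ i, CompleteSpace (Vi i)]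
    (TW : lp (fun i => Wi i) 2 →L[ℂ] H)
    (hTWrange : LinearMap.range (TW : lp (fun i => Wi i) 2 →ₗ[ℂ] H) = W)
    (TV : lp (fun i => Vi i) 2 →L[ℂ] H)
    (hTVrange : LinearMap.range (TV : lp (fun i => Vi i) 2 →ₗ[ℂ] H) = V)
    (P : H →L[ℂ] H) (hPV : ∀ f ∈ V, P f = f) (hPW : ∀ f ∈ Wᗮ, P f = 0)
    -- `G` is the Moore–Penrose pseudoinverse of `S = T_W* T_V`:
    (G : lp (fun i => Wi i) 2 →L[ℂ] lp (fun i => Vi i) 2)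
    (hG1 : ((TW.adjoint.comp TV).comp G).comp (TW.adjoint.comp TV) = TW.adjoint.comp TV) :
    ∀ f : H, TV (G (TW.adjoint f)) = P f := by
  subst hTWrange hTVrange
  exact DFunLike.congr_fun
    (ContinuousLinearMap.comp_comp_adjoint_eq_of_isCompl TV TW G hcompl hG1 P hPV hPW)

/-- Let `V`, `W` be closed subspaces of `H` with `H = V ⊕ Wᗮ`, `(W_i,w_i)` a fusion
frame for `W` and `(V_i,v_i)` a fusion frame for `V` (synthesis operators `T_W`, `T_V`
with ranges `W`, `V`). If `G` is the Moore–Penrose pseudoinverse of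
`T_W* T_V : K_V → K_W`, then `T_V G T_W* = π_{V,Wᗮ}`; i.e. `(V_i,v_i)` is a
`(T_W* T_V)†`-oblique dual fusion frame of `(W_i,w_i)` on `V`. -/
theorem pseudoinverse_gives_oblique_dual
    {H : Type*} [NormedAddCommGroup H] [InnerProductSpace ℂ H] [CompleteSpace H]
    {I : Type*} (V W : Submodule ℂ H) [CompleteSpace V] [CompleteSpace W]
    (hcompl : IsCompl V Wᗮ)
    (Wi Vi : I → Submodule ℂ H) [∀ i, CompleteSpace (Wi i)] [∀ i, CompleteSpace (Vi i)]
    (hWiW : ∀ i, Wi i ≤ W) (hViV : ∀ i, Vi i ≤ V)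
    (w v : I → ℝ) (hw : ∀ i, 0 < w i) (hv : ∀ i, 0 < v i)
    (TW : lp (fun i => Wi i) 2 →L[ℂ] H)
    (hTW : ∀ c, HasSum (fun i => w i • (c i : H)) (TW c))
    (hTWrange : LinearMap.range (TW : lp (fun i => Wi i) 2 →ₗ[ℂ] H) = W)
    (TV : lp (fun i => Vi i) 2 →L[ℂ] H)
    (hTV : ∀ c, HasSum (fun i => v i • (c i : H)) (TV c))
    (hTVrange : LinearMap.range (TV : lp (fun i => Vi i) 2 →ₗ[ℂ] H) = V)
    (P : H →L[ℂ] H) (hPV : ∀ f ∈ V, P f = f) (hPW : ∀ f ∈ Wᗮ, P f = 0)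
    -- `G` is the Moore–Penrose pseudoinverse of `S = T_W* T_V`:
    (G : lp (fun i => Wi i) 2 →L[ℂ] lp (fun i => Vi i) 2)
    (hG1 : ((TW.adjoint.comp TV).comp G).comp (TW.adjoint.comp TV) = TW.adjoint.comp TV)
    (hG2 : (G.comp (TW.adjoint.comp TV)).comp G = G)
    (hG3 : ((TW.adjoint.comp TV).comp G).adjoint = (TW.adjoint.comp TV).comp G)
    (hG4 : (G.comp (TW.adjoint.comp TV)).adjoint = G.comp (TW.adjoint.comp TV)) :
    ∀ f : H, TV (G (TW.adjoint f)) = P f :=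
  pseudoinverse_gives_oblique_dual_general V W hcompl Wi Vi TW hTWrange TV hTVrange P hPV hPW G hG1
end

section
/- Let V, W be closed subspaces of H with H = V ⊕ W⊥ and (W,w) a fusion frame for W with frame operator S_{W,w} = T_{W,w}T*_{W,w}. For any f ∈ H and any (f_i)_{i∈I} ∈ K_W with T_{W,w}(f_i) = π_{W,V⊥} f, one has ‖(f_i)‖² = ‖T*_{W,w} S†_{W,w} π_{W,V⊥} f‖² + ‖(f_i) − T*_{W,w} S†_{W,w} π_{W,V⊥} f‖². In particular the canonical coefficients T*_{W,w} S†_{W,w} π_{W,V⊥} f have minimal norm among all such coefficient sequences. -/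
/-! The canonical coefficients `g = T_W* S† π f` lie in the range of `T_W*`, which is orthogonal
to `ker T_W`. The Penrose equations `S S† S = S` and `(S S†)* = S S†` make `S S†` the identity on
the range of `T_W`, so `T_W g = π f = T_W c`; hence `c - g ∈ ker T_W`, and the identity is
Pythagoras for `c = g + (c - g)`. -/

open ContinuousLinearMap

section PseudoinverseOfFrameOperator

variable {𝕜 E F : Type*} [RCLike 𝕜]
  [NormedAddCommGroup E] [InnerProductSpace 𝕜 E] [CompleteSpace E]
  [NormedAddCommGroup F] [InnerProductSpace 𝕜 F] [CompleteSpace F]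

theorem norm_sq_eq_norm_sq_adjoint_add_norm_sq_sub (T : E →L[𝕜] F) {c : E} {x : F}
    (h : T c = T (T.adjoint x)) :
    ‖c‖ ^ 2 = ‖T.adjoint x‖ ^ 2 + ‖c - T.adjoint x‖ ^ 2 := by
  have horth : inner 𝕜 (T.adjoint x) (c - T.adjoint x) = 0 := by
    rw [adjoint_inner_left, map_sub, h, sub_self, inner_zero_right]
  simpa [sq] using norm_add_sq_eq_norm_sq_add_norm_sq_of_inner_eq_zero _ _ horth

variable {T : E →L[𝕜] F} {Sd : F →L[𝕜] F}

theorem self_comp_adjoint_comp_comp_self_comp_adjoint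
    (hS1 : ((T.comp T.adjoint).comp Sd).comp (T.comp T.adjoint) = T.comp T.adjoint)
    (hS3 : ((T.comp T.adjoint).comp Sd).adjoint = (T.comp T.adjoint).comp Sd) :
    (T.comp T.adjoint).comp ((T.comp T.adjoint).comp Sd) = T.comp T.adjoint := by
  have hS : (T.comp T.adjoint).adjoint = T.comp T.adjoint := by
    rw [adjoint_comp, adjoint_adjoint]
  calc (T.comp T.adjoint).comp ((T.comp T.adjoint).comp Sd)
      = (T.comp T.adjoint).adjoint.comp ((T.comp T.adjoint).comp Sd).adjoint := by rw [hS3, hS]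
    _ = (((T.comp T.adjoint).comp Sd).comp (T.comp T.adjoint)).adjoint := (adjoint_comp _ _).symm
    _ = T.comp T.adjoint := by rw [hS1, hS]

theorem adjoint_comp_self_comp_adjoint_comp
    (hS1 : ((T.comp T.adjoint).comp Sd).comp (T.comp T.adjoint) = T.comp T.adjoint)
    (hS3 : ((T.comp T.adjoint).comp Sd).adjoint = (T.comp T.adjoint).comp Sd) :
    T.adjoint.comp ((T.comp T.adjoint).comp Sd) = T.adjoint := by
  ext y
  have hker : (T.comp T.adjoint).comp Sd y - y ∈ (T.comp T.adjoint).ker := by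
    rw [LinearMap.mem_ker, coe_coe, map_sub, ← comp_apply,
      self_comp_adjoint_comp_comp_self_comp_adjoint hS1 hS3, sub_self]
  rw [ker_self_comp_adjoint, LinearMap.mem_ker, coe_coe, map_sub, sub_eq_zero] at hker
  exact hker

theorem self_comp_adjoint_comp_comp_self
    (hS1 : ((T.comp T.adjoint).comp Sd).comp (T.comp T.adjoint) = T.comp T.adjoint)
    (hS3 : ((T.comp T.adjoint).comp Sd).adjoint = (T.comp T.adjoint).comp Sd) :
    ((T.comp T.adjoint).comp Sd).comp T = T := by
  simpa only [adjoint_comp, adjoint_adjoint, hS3] using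
    congrArg adjoint (adjoint_comp_self_comp_adjoint_comp hS1 hS3)

end PseudoinverseOfFrameOperator

theorem canonical_coefficients_minimal_norm_general
    {H : Type*} [NormedAddCommGroup H] [InnerProductSpace ℂ H] [CompleteSpace H]
    {I : Type*}
    (Wi : I → Submodule ℂ H) [∀ i, CompleteSpace (Wi i)]
    (TW : lp (fun i => Wi i) 2 →L[ℂ] H)
    -- the oblique projection `π_{W,Vᗮ}`:
    (P' : H →L[ℂ] H)
    -- `Sd` is the Moore–Penrose pseudoinverse of the frame operator `S = T_W T_W*`:
    (Sd : H →L[ℂ] H)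
    (hS1 : ((TW.comp TW.adjoint).comp Sd).comp (TW.comp TW.adjoint) = TW.comp TW.adjoint)
    (hS3 : ((TW.comp TW.adjoint).comp Sd).adjoint = (TW.comp TW.adjoint).comp Sd) :
    ∀ (f : H) (c : lp (fun i => Wi i) 2), TW c = P' f →
      ‖c‖ ^ 2 = ‖TW.adjoint (Sd (P' f))‖ ^ 2 + ‖c - TW.adjoint (Sd (P' f))‖ ^ 2 := by
  intro f c hc
  apply norm_sq_eq_norm_sq_adjoint_add_norm_sq_sub
  have hQ := congrArg (· c) (self_comp_adjoint_comp_comp_self hS1 hS3)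
  simpa only [comp_apply, hc, eq_comm] using hQ

/-- Let `H = V ⊕ Wᗮ` (equivalently `H = W ⊕ Vᗮ`) and `(W_i,w_i)` a fusion frame for `W`
with synthesis operator `T_W`, frame operator `S = T_W T_W*` and Moore–Penrose
pseudoinverse `S†`. For any `f ∈ H` and any `c ∈ K_W` with `T_W c = π_{W,Vᗮ} f`,
`‖c‖² = ‖T_W* S† π_{W,Vᗮ} f‖² + ‖c − T_W* S† π_{W,Vᗮ} f‖²`; in particular the
canonical coefficients have minimal norm. -/
theorem canonical_coefficients_minimal_norm
    {H : Type*} [NormedAddCommGroup H] [InnerProductSpace ℂ H] [CompleteSpace H]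
    {I : Type*} (V W : Submodule ℂ H) [CompleteSpace V] [CompleteSpace W]
    (hcompl : IsCompl V Wᗮ)
    (Wi : I → Submodule ℂ H) [∀ i, CompleteSpace (Wi i)] (hWiW : ∀ i, Wi i ≤ W)
    (w : I → ℝ) (hw : ∀ i, 0 < w i)
    (TW : lp (fun i => Wi i) 2 →L[ℂ] H)
    (hTW : ∀ c, HasSum (fun i => w i • (c i : H)) (TW c))
    (hTWrange : LinearMap.range (TW : lp (fun i => Wi i) 2 →ₗ[ℂ] H) = W)
    -- the oblique projection `π_{W,Vᗮ}`:
    (P' : H →L[ℂ] H) (hP'W : ∀ f ∈ W, P' f = f) (hP'V : ∀ f ∈ Vᗮ, P' f = 0)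
    -- `Sd` is the Moore–Penrose pseudoinverse of the frame operator `S = T_W T_W*`:
    (Sd : H →L[ℂ] H)
    (hS1 : ((TW.comp TW.adjoint).comp Sd).comp (TW.comp TW.adjoint) = TW.comp TW.adjoint)
    (hS2 : (Sd.comp (TW.comp TW.adjoint)).comp Sd = Sd)
    (hS3 : ((TW.comp TW.adjoint).comp Sd).adjoint = (TW.comp TW.adjoint).comp Sd)
    (hS4 : (Sd.comp (TW.comp TW.adjoint)).adjoint = Sd.comp (TW.comp TW.adjoint)) :
    ∀ (f : H) (c : lp (fun i => Wi i) 2), TW c = P' f →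
      ‖c‖ ^ 2 = ‖TW.adjoint (Sd (P' f))‖ ^ 2 + ‖c - TW.adjoint (Sd (P' f))‖ ^ 2 :=
  canonical_coefficients_minimal_norm_general Wi TW P' Sd hS1 hS3
end

section
/- Let (W,w) be a Riesz fusion basis for a closed subspace W of H (i.e., its synthesis operator T_{W,w} is injective with range W) and let V be a closed subspace with H = V ⊕ W⊥. Then the family (π_{V,W⊥} S†_{W,w} W_i, w_i)_{i∈I} is a Riesz fusion basis for V, i.e., the synthesis operator of the images π_{V,W⊥}S†_{W,w}W_i is injective. -/
/-!
The frame operator `S = T_W T_W*` has kernel `(range T_W)ᗮ = Wᗮ`, and the Penrose equations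
`S S† S = S`, `(S S†)* = S S†` make `S S†` the identity on `W`. Since `π_{V,Wᗮ}` only changes a
vector by an element of `Wᗮ = ker S`, the operators `E = π_{V,Wᗮ} S†` and `S` restrict to mutually
inverse maps between `W` and `V`. Mapping coefficients componentwise by `E` and `S` identifies
`ℓ²(W_i)` with `ℓ²(E W_i)` and intertwines the two synthesis operators, so injectivity of `T_W`
and `range T_W = W` transfer to `T_V` and `V`.
-/

open scoped ENNReal

namespace ContinuousLinearMap

variable {𝕜 E F : Type*} [RCLike 𝕜] [NormedAddCommGroup E] [InnerProductSpace 𝕜 E]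
  [CompleteSpace E] [NormedAddCommGroup F] [InnerProductSpace 𝕜 F] [CompleteSpace F]

theorem apply_apply_eq_self_of_mem_orthogonal_ker_adjoint {T : E →L[𝕜] F} {G : F →L[𝕜] E}
    (h1 : (T.comp G).comp T = T) (h3 : (T.comp G).adjoint = T.comp G) {y : F}
    (hy : y ∈ T.adjoint.kerᗮ) : T (G y) = y := by
  have hadj : T.adjoint.comp (T.comp G) = T.adjoint := by
    rw [← h3, ← adjoint_comp, h1]
  have hker : y - T (G y) ∈ T.adjoint.ker := by
    rw [LinearMap.mem_ker, coe_coe, map_sub, sub_eq_zero]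
    exact (DFunLike.congr_fun hadj y).symm
  have hperp : y - T (G y) ∈ T.adjoint.kerᗮ := by
    refine sub_mem hy ?_
    rw [← orthogonal_range]
    exact Submodule.le_orthogonal_orthogonal _ ⟨G y, rfl⟩
  exact (sub_eq_zero.mp (Submodule.disjoint_def.mp (Submodule.orthogonal_disjoint _) _ hker
    hperp)).symm

theorem comp_adjoint_apply_apply_eq_self {T : E →L[𝕜] F} {G : F →L[𝕜] F}
    (h1 : ((T.comp T.adjoint).comp G).comp (T.comp T.adjoint) = T.comp T.adjoint)
    (h3 : ((T.comp T.adjoint).comp G).adjoint = (T.comp T.adjoint).comp G) {y : F}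
    (hy : y ∈ T.range) : T (T.adjoint (G y)) = y := by
  refine apply_apply_eq_self_of_mem_orthogonal_ker_adjoint h1 h3 ?_
  rw [adjoint_comp, adjoint_adjoint, ker_self_comp_adjoint, ← orthogonal_range]
  exact Submodule.le_orthogonal_orthogonal _ hy

end ContinuousLinearMap

namespace Submodule

variable {R M : Type*} [Ring R] [AddCommGroup M] [Module R M] {p q : Submodule R M}
  {f : M →ₗ[R] M}

theorem apply_mem_of_isCompl (h : IsCompl p q) (hp : ∀ x ∈ p, f x = x) (hq : ∀ x ∈ q, f x = 0)
    (x : M) : f x ∈ p := by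
  obtain ⟨y, hy, z, hz, rfl⟩ := mem_sup.mp (h.sup_eq_top ▸ mem_top : x ∈ p ⊔ q)
  rwa [map_add, hp y hy, hq z hz, add_zero]

theorem sub_apply_mem_of_isCompl (h : IsCompl p q) (hp : ∀ x ∈ p, f x = x)
    (hq : ∀ x ∈ q, f x = 0) (x : M) : x - f x ∈ q := by
  obtain ⟨y, hy, z, hz, rfl⟩ := mem_sup.mp (h.sup_eq_top ▸ mem_top : x ∈ p ⊔ q)
  rwa [map_add, hp y hy, hq z hz, add_zero, add_sub_cancel_left]

end Submodule

section Synthesis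

variable {I H H' : Type*} [NormedAddCommGroup H] [NormedSpace ℂ H] [NormedAddCommGroup H']
  [NormedSpace ℂ H'] {Wi : I → Submodule ℂ H} {Vi : I → Submodule ℂ H'}
  {p : ℝ≥0∞}

theorem exists_lp_apply_eq (E : H →L[ℂ] H') (hE : ∀ i, Set.MapsTo E (Wi i) (Vi i))
    (b : lp (fun i => Wi i) p) : ∃ c : lp (fun i => Vi i) p, ∀ i, (c i : H') = E (b i) := by
  have hc : Memℓp (fun i => (⟨E (b i), hE i (b i).2⟩ : Vi i)) p :=
    ((lp.memℓp b).norm.const_mul ‖E‖).mono fun i => E.le_opNorm (b i)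
  exact ⟨⟨_, hc⟩, fun i => rfl⟩

variable [Fact (1 ≤ p)] {w : I → ℝ} {TW : lp (fun i => Wi i) p →L[ℂ] H}
  {TV : lp (fun i => Vi i) p →L[ℂ] H'}

theorem synthesis_apply_eq_of_forall_apply_eq (E : H →L[ℂ] H')
    (hTW : ∀ b, HasSum (fun i => w i • (b i : H)) (TW b))
    (hTV : ∀ c, HasSum (fun i => w i • (c i : H')) (TV c))
    {b : lp (fun i => Wi i) p} {c : lp (fun i => Vi i) p} (hbc : ∀ i, (c i : H') = E (b i)) :
    TV c = E (TW b) :=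
  (hTV c).unique <| by
    simpa only [ContinuousLinearMap.map_smul_of_tower, ← hbc] using (hTW b).mapL E

theorem synthesis_injective_and_range_eq_of_invOn {W : Submodule ℂ H} {V : Submodule ℂ H'}
    (hTW : ∀ b, HasSum (fun i => w i • (b i : H)) (TW b))
    (hTV : ∀ c, HasSum (fun i => w i • (c i : H')) (TV c))
    (hTWinj : Function.Injective TW) (hTWrange : TW.range = W) (hWiW : ∀ i, Wi i ≤ W)
    {E : H →L[ℂ] H'} {R : H' →L[ℂ] H} (hVi : ∀ i, Vi i = (Wi i).map (E : H →ₗ[ℂ] H'))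
    (hEWV : Set.MapsTo E W V) (hRVW : Set.MapsTo R V W) (hinv : Set.InvOn R E W V) :
    Function.Injective TV ∧ TV.range = V := by
  have hE : ∀ i, Set.MapsTo E (Wi i) (Vi i) := fun i x hx => hVi i ▸ Submodule.mem_map_of_mem hx
  have hRE : ∀ i, ∀ y ∈ Vi i, R y ∈ Wi i ∧ E (R y) = y := by
    intro i y hy
    obtain ⟨x, hx, rfl⟩ := hVi i ▸ hy
    have hRx : R (E x) = x := hinv.1 (hWiW i hx)
    refine ⟨?_, congrArg E hRx⟩
    rwa [ContinuousLinearMap.coe_coe, hRx]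
  have hlift : ∀ c : lp (fun i => Vi i) p, ∃ b : lp (fun i => Wi i) p,
      ∀ i, (c i : H') = E (b i) := by
    intro c
    obtain ⟨b, hb⟩ := exists_lp_apply_eq R (fun i y hy => (hRE i y hy).1) c
    exact ⟨b, fun i => by rw [hb, (hRE i _ (c i).2).2]⟩
  have hTWW : ∀ b, TW b ∈ W := fun b => hTWrange.le ⟨b, rfl⟩
  refine ⟨(injective_iff_map_eq_zero TV).2 fun c hc => ?_, le_antisymm ?_ fun v hv => ?_⟩
  · obtain ⟨b, hb⟩ := hlift c
    have hTb : TW b = 0 := by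
      rw [← hinv.1 (hTWW b), ← synthesis_apply_eq_of_forall_apply_eq E hTW hTV hb, hc, map_zero]
    have hb0 : b = 0 := hTWinj (hTb.trans (map_zero TW).symm)
    ext i
    rw [hb i, hb0]
    simp
  · rintro _ ⟨c, rfl⟩
    obtain ⟨b, hb⟩ := hlift c
    rw [ContinuousLinearMap.coe_coe, synthesis_apply_eq_of_forall_apply_eq E hTW hTV hb]
    exact hEWV (hTWW b)
  · obtain ⟨b, hb⟩ : R v ∈ TW.range := hTWrange ▸ hRVW hv
    obtain ⟨c, hc⟩ := exists_lp_apply_eq E hE b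
    refine ⟨c, ?_⟩
    rw [ContinuousLinearMap.coe_coe, synthesis_apply_eq_of_forall_apply_eq E hTW hTV hc,
      show TW b = R v from hb]
    exact hinv.2 hv

end Synthesis

theorem canonical_oblique_dual_of_riesz_fusion_basis_is_riesz_general
    {H : Type*} [NormedAddCommGroup H] [InnerProductSpace ℂ H] [CompleteSpace H]
    {I : Type*} (V W : Submodule ℂ H)
    (hcompl : IsCompl V Wᗮ)
    (Wi : I → Submodule ℂ H) [∀ i, CompleteSpace (Wi i)] (hWiW : ∀ i, Wi i ≤ W)
    (w : I → ℝ)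
    (TW : lp (fun i => Wi i) 2 →L[ℂ] H)
    (hTW : ∀ c, HasSum (fun i => w i • (c i : H)) (TW c))
    (hTWinj : Function.Injective TW) (hTWrange : LinearMap.range (TW : lp (fun i => Wi i) 2 →ₗ[ℂ] H) = W)
    -- the oblique projection `π_{V,Wᗮ}`:
    (P : H →L[ℂ] H) (hPV : ∀ f ∈ V, P f = f) (hPW : ∀ f ∈ Wᗮ, P f = 0)
    -- `Sd` is the Moore–Penrose pseudoinverse of the frame operator `S = T_W T_W*`:
    (Sd : H →L[ℂ] H)
    (hS1 : ((TW.comp TW.adjoint).comp Sd).comp (TW.comp TW.adjoint) = TW.comp TW.adjoint)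
    (hS3 : ((TW.comp TW.adjoint).comp Sd).adjoint = (TW.comp TW.adjoint).comp Sd)
    -- the image subspaces `V_i = π_{V,Wᗮ} S† W_i`:
    (Vi : I → Submodule ℂ H)
    (hVi : ∀ i, Vi i = (Wi i).map ((P.comp Sd : H →L[ℂ] H) : H →ₗ[ℂ] H))
    -- the synthesis operator of `(V_i, w_i)`:
    (TV : lp (fun i => Vi i) 2 →L[ℂ] H)
    (hTV : ∀ c, HasSum (fun i => w i • (c i : H)) (TV c)) :
    Function.Injective TV ∧ LinearMap.range (TV : lp (fun i => Vi i) 2 →ₗ[ℂ] H) = V := by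
  set S := TW.comp TW.adjoint
  have hkerS : S.ker = Wᗮ := by
    rw [ContinuousLinearMap.ker_self_comp_adjoint, ← ContinuousLinearMap.orthogonal_range, hTWrange]
  have hSP : ∀ x, S (P x) = S x := fun x => by
    have : x - P x ∈ S.ker := hkerS ▸ Submodule.sub_apply_mem_of_isCompl hcompl hPV hPW x
    rwa [LinearMap.mem_ker, ContinuousLinearMap.coe_coe, map_sub, sub_eq_zero, eq_comm] at this
  refine synthesis_injective_and_range_eq_of_invOn (R := S) hTW hTV hTWinj hTWrange hWiW hVi
    (fun x _ => Submodule.apply_mem_of_isCompl hcompl hPV hPW _)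
    (fun v _ => hTWrange.le ⟨TW.adjoint v, rfl⟩)
    ⟨fun x hx => ?_, fun v hv => ?_⟩
  · show S (P (Sd x)) = x
    rw [hSP]
    exact ContinuousLinearMap.comp_adjoint_apply_apply_eq_self hS1 hS3 (hTWrange ▸ hx)
  · show P (Sd (S v)) = v
    have hker : v - Sd (S v) ∈ Wᗮ := hkerS ▸ by
      rw [LinearMap.mem_ker, ContinuousLinearMap.coe_coe, map_sub, sub_eq_zero]
      exact (DFunLike.congr_fun hS1 v).symm
    calc P (Sd (S v)) = P v := by rw [eq_comm, ← sub_eq_zero, ← map_sub, hPW _ hker]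
      _ = v := hPV v hv

/-- Let `(W_i,w_i)` be a Riesz fusion basis for a closed subspace `W` of `H` (synthesis
operator `T_W` injective with range `W`) and `V` a closed subspace with `H = V ⊕ Wᗮ`.
Then `(π_{V,Wᗮ} S† W_i, w_i)` is a Riesz fusion basis for `V`: its synthesis operator
is injective (with range `V`). Here `S†` is the Moore–Penrose pseudoinverse of the
fusion frame operator `S = T_W T_W*` and `π_{V,Wᗮ}` the oblique projection. -/
theorem canonical_oblique_dual_of_riesz_fusion_basis_is_riesz
    {H : Type*} [NormedAddCommGroup H] [InnerProductSpace ℂ H] [CompleteSpace H]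
    {I : Type*} (V W : Submodule ℂ H) [CompleteSpace V] [CompleteSpace W]
    (hcompl : IsCompl V Wᗮ)
    (Wi : I → Submodule ℂ H) [∀ i, CompleteSpace (Wi i)] (hWiW : ∀ i, Wi i ≤ W)
    (w : I → ℝ) (hw : ∀ i, 0 < w i)
    (TW : lp (fun i => Wi i) 2 →L[ℂ] H)
    (hTW : ∀ c, HasSum (fun i => w i • (c i : H)) (TW c))
    (hTWinj : Function.Injective TW) (hTWrange : LinearMap.range (TW : lp (fun i => Wi i) 2 →ₗ[ℂ] H) = W)
    -- the oblique projection `π_{V,Wᗮ}`: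
    (P : H →L[ℂ] H) (hPV : ∀ f ∈ V, P f = f) (hPW : ∀ f ∈ Wᗮ, P f = 0)
    -- `Sd` is the Moore–Penrose pseudoinverse of the frame operator `S = T_W T_W*`:
    (Sd : H →L[ℂ] H)
    (hS1 : ((TW.comp TW.adjoint).comp Sd).comp (TW.comp TW.adjoint) = TW.comp TW.adjoint)
    (hS2 : (Sd.comp (TW.comp TW.adjoint)).comp Sd = Sd)
    (hS3 : ((TW.comp TW.adjoint).comp Sd).adjoint = (TW.comp TW.adjoint).comp Sd)
    (hS4 : (Sd.comp (TW.comp TW.adjoint)).adjoint = Sd.comp (TW.comp TW.adjoint))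
    -- the image subspaces `V_i = π_{V,Wᗮ} S† W_i`:
    (Vi : I → Submodule ℂ H)
    (hVi : ∀ i, Vi i = (Wi i).map ((P.comp Sd : H →L[ℂ] H) : H →ₗ[ℂ] H))
    -- the synthesis operator of `(V_i, w_i)`:
    (TV : lp (fun i => Vi i) 2 →L[ℂ] H)
    (hTV : ∀ c, HasSum (fun i => w i • (c i : H)) (TV c)) :
    Function.Injective TV ∧ LinearMap.range (TV : lp (fun i => Vi i) 2 →ₗ[ℂ] H) = V :=
  canonical_oblique_dual_of_riesz_fusion_basis_is_riesz_general V W hcompl Wi hWiW w TW hTW hTWinj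
    hTWrange P hPV hPW Sd hS1 hS3 Vi hVi TV hTV
end

section
/- Let (W,w) be a Riesz fusion basis for W and (V,v) a Riesz fusion basis for V, where H = V ⊕ W⊥. Then the operator T*_{V,v} T_{W,w} : K_W → K_V is bijective. -/
/-!
`T_V* T_W` is injective because a vector of `W` killed by `T_V*` lies in `W ∩ V⊥ = 0`, and
surjective because `T_V*` is onto (`T_V` is an isomorphism onto the closed subspace `V`) while
`H = W ⊕ V⊥`. That decomposition comes from `P*`, where `P` is the bounded projection onto `V`
along `W⊥`: `P*` is idempotent with range in `(ker P)⊥ = W` and kernel `(range P)⊥ = V⊥`.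
-/

open ContinuousLinearMap

namespace Submodule

variable {𝕜 E : Type*} [RCLike 𝕜] [NormedAddCommGroup E] [InnerProductSpace 𝕜 E]

theorem disjoint_orthogonal_of_codisjoint {V W : Submodule 𝕜 E} (h : Codisjoint V Wᗮ) :
    Disjoint W Vᗮ := by
  have : Wᗮᗮ ⊓ Vᗮ = ⊥ := by rw [inf_orthogonal, h.symm.eq_top, top_orthogonal_eq_bot]
  exact (disjoint_iff.mpr this).mono_left W.le_orthogonal_orthogonal

theorem codisjoint_orthogonal_of_isCompl [CompleteSpace E] {V W : Submodule 𝕜 E}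
    [CompleteSpace V] [CompleteSpace W] (h : IsCompl V Wᗮ) : Codisjoint W Vᗮ := by
  have hP := IsCompl.isTopCompl_of_isClosed h
    (completeSpace_coe_iff_isComplete.mp ‹_›).isClosed W.isClosed_orthogonal
  set P := V.projectionL Wᗮ hP
  have hidem : IsIdempotentElem (adjoint P) := by
    rw [← star_eq_adjoint, IsIdempotentElem.star_iff]
    exact isIdempotentElem_projectionL hP
  have hrange : (adjoint P : E →ₗ[𝕜] E).range ≤ W :=
    calc (adjoint P : E →ₗ[𝕜] E).range
        ≤ (adjoint P : E →ₗ[𝕜] E).range.topologicalClosure := le_topologicalClosure _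
      _ = Wᗮᗮ := by rw [← orthogonal_ker, ker_projectionL]
      _ = W := W.orthogonal_orthogonal
  have hker : (adjoint P : E →ₗ[𝕜] E).ker = Vᗮ := by
    rw [← orthogonal_range, range_projectionL]
  exact hker ▸ hidem.isTopCompl.isCompl.codisjoint.mono_left hrange

theorem isCompl_orthogonal_swap [CompleteSpace E] {V W : Submodule 𝕜 E}
    [CompleteSpace V] [CompleteSpace W] (h : IsCompl V Wᗮ) : IsCompl W Vᗮ :=
  ⟨disjoint_orthogonal_of_codisjoint h.codisjoint, codisjoint_orthogonal_of_isCompl h⟩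

end Submodule

namespace ContinuousLinearMap

variable {𝕜 E F : Type*} [RCLike 𝕜] [NormedAddCommGroup E] [InnerProductSpace 𝕜 E]
  [NormedAddCommGroup F] [InnerProductSpace 𝕜 F] [CompleteSpace E] [CompleteSpace F]

theorem surjective_adjoint_of_injective_of_isClosed_range {T : E →L[𝕜] F}
    (hinj : Function.Injective T) (hclo : IsClosed (Set.range T)) :
    Function.Surjective (adjoint T) := by
  have : CompleteSpace (T : E →ₗ[𝕜] F).range := hclo.completeSpace_coe
  set e := T.equivRange hinj hclo
  have he : Function.Surjective (adjoint (e : E →L[𝕜] (T : E →ₗ[𝕜] F).range)) := fun x ↦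
    ⟨adjoint (e.symm : (T : E →ₗ[𝕜] F).range →L[𝕜] E) x, by
      rw [← comp_apply, ← adjoint_comp, e.coe_symm_comp_coe, adjoint_id, id_apply]⟩
  have hT : T = (T : E →ₗ[𝕜] F).range.subtypeL ∘L (e : E →L[𝕜] (T : E →ₗ[𝕜] F).range) := rfl
  rw [hT, adjoint_comp, Submodule.adjoint_subtypeL, coe_comp]
  exact he.comp fun y ↦ ⟨y, Submodule.orthogonalProjectionOnto_mem_subspace_eq_self y⟩

end ContinuousLinearMap

namespace LinearMap

variable {R E F G : Type*} [Ring R] [AddCommGroup E] [Module R E] [AddCommGroup F] [Module R F]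
  [AddCommGroup G] [Module R G]

theorem bijective_comp_of_isCompl_ker {A : E →ₗ[R] F} {L : F →ₗ[R] G}
    (hA : Function.Injective A) (hL : Function.Surjective L) (hcompl : IsCompl A.range L.ker) :
    Function.Bijective (L ∘ₗ A) := by
  refine ⟨(injective_iff_map_eq_zero _).mpr fun a ha ↦ ?_, fun g ↦ ?_⟩
  · have : A a ∈ A.range ⊓ L.ker := ⟨mem_range_self A a, ha⟩
    rw [hcompl.inf_eq_bot, Submodule.mem_bot] at this
    exact hA (this.trans A.map_zero.symm)
  · obtain ⟨x, rfl⟩ := hL g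
    obtain ⟨_, ⟨a, rfl⟩, k, hk, rfl⟩ :=
      Submodule.mem_sup.mp (hcompl.sup_eq_top ▸ Submodule.mem_top (x := x))
    exact ⟨a, by rw [comp_apply, map_add, mem_ker.mp hk, add_zero]⟩

end LinearMap

theorem analysis_comp_synthesis_bijective_of_riesz_fusion_bases_general
    {H : Type*} [NormedAddCommGroup H] [InnerProductSpace ℂ H] [CompleteSpace H]
    {I : Type*} (V W : Submodule ℂ H) [CompleteSpace V] [CompleteSpace W]
    (hcompl : IsCompl V Wᗮ)
    (Wi Vi : I → Submodule ℂ H) [∀ i, CompleteSpace (Vi i)]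
    (TW : lp (fun i => Wi i) 2 →L[ℂ] H)
    (hTWinj : Function.Injective TW) (hTWrange : LinearMap.range TW.toLinearMap = W)
    (TV : lp (fun i => Vi i) 2 →L[ℂ] H)
    (hTVinj : Function.Injective TV) (hTVrange : LinearMap.range TV.toLinearMap = V) :
    Function.Bijective (TV.adjoint.comp TW) := by
  have hTVclosed : IsClosed (Set.range TV) := by
    rw [← coe_coe, ← LinearMap.coe_range, hTVrange]
    exact (completeSpace_coe_iff_isComplete.mp ‹_›).isClosed
  have hker : LinearMap.ker TV.adjoint.toLinearMap = Vᗮ := by rw [← orthogonal_range, hTVrange]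
  exact LinearMap.bijective_comp_of_isCompl_ker hTWinj
    (surjective_adjoint_of_injective_of_isClosed_range hTVinj hTVclosed)
    (by rw [hTWrange, hker]; exact Submodule.isCompl_orthogonal_swap hcompl)

/-- If `(W_i,w_i)` is a Riesz fusion basis for `W` and `(V_i,v_i)` a Riesz fusion basis
for `V`, where `H = V ⊕ Wᗮ`, then `T_V* T_W : K_W → K_V` is bijective. -/
theorem analysis_comp_synthesis_bijective_of_riesz_fusion_bases
    {H : Type*} [NormedAddCommGroup H] [InnerProductSpace ℂ H] [CompleteSpace H]
    {I : Type*} (V W : Submodule ℂ H) [CompleteSpace V] [CompleteSpace W]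
    (hcompl : IsCompl V Wᗮ)
    (Wi Vi : I → Submodule ℂ H) [∀ i, CompleteSpace (Wi i)] [∀ i, CompleteSpace (Vi i)]
    (hWiW : ∀ i, Wi i ≤ W) (hViV : ∀ i, Vi i ≤ V)
    (w v : I → ℝ) (hw : ∀ i, 0 < w i) (hv : ∀ i, 0 < v i)
    (TW : lp (fun i => Wi i) 2 →L[ℂ] H)
    (hTW : ∀ c, HasSum (fun i => w i • (c i : H)) (TW c))
    (hTWinj : Function.Injective TW) (hTWrange : LinearMap.range TW.toLinearMap = W)
    (TV : lp (fun i => Vi i) 2 →L[ℂ] H)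
    (hTV : ∀ c, HasSum (fun i => v i • (c i : H)) (TV c))
    (hTVinj : Function.Injective TV) (hTVrange : LinearMap.range TV.toLinearMap = V) :
    Function.Bijective (TV.adjoint.comp TW) :=
  analysis_comp_synthesis_bijective_of_riesz_fusion_bases_general V W hcompl Wi Vi TW hTWinj
    hTWrange TV hTVinj hTVrange
end

section
/- A pair (W,w) is a fusion frame for a closed subspace W of H with bounds A, B if and only if: (1) span of ∪_i W_i is dense in W, and (2) the synthesis operator T_{W,w} is well defined and bounded on K_W = ⊕_i W_i and satisfies A‖(f_i)‖² ≤ ‖T_{W,w}(f_i)‖² ≤ B‖(f_i)‖² for all (f_i) ∈ Ker(T_{W,w})⊥. -/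
/-!
The analysis operator `U f = (wᵢ π_{Wᵢ} f)ᵢ` satisfies `‖U f‖² = ∑ wᵢ² ‖π_{Wᵢ} f‖²`, its kernel
is `(⋃ Wᵢ)ᗮ`, and its adjoint is the synthesis operator `T_W`. So the fusion frame inequalities
say `A‖f‖² ≤ ‖U f‖² ≤ B‖f‖²` on `W`; the lower one forces `W = (ker U)ᗮ`, which is the density
condition. A two-sided bound on `(ker T)ᗮ` passes from any operator `T` to `T†`: the upper one
because `‖T†‖ = ‖T‖`, the lower one because `‖T x‖² = ⟪x, T† T x⟫ ≤ ‖x‖ ‖T† T x‖` gives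
`A‖T x‖² ≤ ‖T† T x‖²`, and `(ker T†)ᗮ` is the closure of the range of `T`.
-/

open scoped InnerProductSpace InnerProduct

theorem mul_sq_le_sq_of_sq_le_mul {A a b c : ℝ} (hb : 0 ≤ b) (hc : 0 ≤ c)
    (habc : a ^ 2 ≤ c * b) (hA : A * c ^ 2 ≤ a ^ 2) : A * a ^ 2 ≤ b ^ 2 := by
  rcases le_or_gt A 0 with hA0 | hA0
  · nlinarith [sq_nonneg a, sq_nonneg b]
  rcases eq_or_ne a 0 with rfl | ha
  · simpa using sq_nonneg b
  have ha2 : 0 < a ^ 2 := by positivity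
  nlinarith [mul_le_mul_of_nonneg_left hA ha2.le,
    mul_le_mul habc habc (sq_nonneg a) (by positivity)]

theorem le_sqrt_mul_iff_sq_le {a b B : ℝ} (ha : 0 ≤ a) (hb : 0 ≤ b) (hB : 0 ≤ B) :
    a ≤ √B * b ↔ a ^ 2 ≤ B * b ^ 2 := by
  rw [← Real.sqrt_sq hb, ← Real.sqrt_mul hB, Real.sqrt_sq hb, Real.le_sqrt ha (by positivity)]

namespace ContinuousLinearMap

theorem opNorm_le_sqrt_iff {𝕜 E F : Type*} [NontriviallyNormedField 𝕜]
    [SeminormedAddCommGroup E] [NormedSpace 𝕜 E] [SeminormedAddCommGroup F] [NormedSpace 𝕜 F]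
    (T : E →L[𝕜] F) {B : ℝ} (hB : 0 ≤ B) :
    ‖T‖ ≤ √B ↔ ∀ x, ‖T x‖ ^ 2 ≤ B * ‖x‖ ^ 2 := by
  simp only [T.opNorm_le_iff (Real.sqrt_nonneg B),
    le_sqrt_mul_iff_sq_le (norm_nonneg _) (norm_nonneg _) hB]

variable {𝕜 E F : Type*} [RCLike 𝕜]
  [NormedAddCommGroup E] [InnerProductSpace 𝕜 E] [CompleteSpace E]
  [NormedAddCommGroup F] [InnerProductSpace 𝕜 F]

theorem exists_mem_orthogonal_ker_apply_eq (T : E →L[𝕜] F) (x : E) :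
    ∃ y ∈ T.kerᗮ, T y = T x ∧ ‖y‖ ≤ ‖x‖ := by
  have : CompleteSpace T.ker := T.isClosed_ker.completeSpace_coe
  refine ⟨T.kerᗮ.starProjection x, Submodule.starProjection_apply_mem _ x, ?_,
    Submodule.norm_starProjection_apply_le _ x⟩
  have hker : x - T.kerᗮ.starProjection x ∈ T.ker := by
    have := Submodule.sub_starProjection_mem_orthogonal (K := T.kerᗮ) x
    rwa [Submodule.orthogonal_orthogonal] at this
  have hTx : T (x - T.kerᗮ.starProjection x) = 0 := hker
  rw [map_sub, sub_eq_zero] at hTx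
  exact hTx.symm

theorem forall_norm_sq_apply_le_of_orthogonal_ker {T : E →L[𝕜] F} {B : ℝ} (hB : 0 ≤ B)
    (h : ∀ x ∈ T.kerᗮ, ‖T x‖ ^ 2 ≤ B * ‖x‖ ^ 2) (x : E) :
    ‖T x‖ ^ 2 ≤ B * ‖x‖ ^ 2 := by
  obtain ⟨y, hy, hTy, hyx⟩ := T.exists_mem_orthogonal_ker_apply_eq x
  calc ‖T x‖ ^ 2 = ‖T y‖ ^ 2 := by rw [hTy]
    _ ≤ B * ‖y‖ ^ 2 := h y hy
    _ ≤ B * ‖x‖ ^ 2 := by gcongr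

theorem orthogonal_ker_eq_of_le {T : E →L[𝕜] F} {A : ℝ} (hA : 0 < A) {V : Submodule 𝕜 E}
    (hV : T.kerᗮ ≤ V) (h : ∀ x ∈ V, A * ‖x‖ ^ 2 ≤ ‖T x‖ ^ 2) :
    T.kerᗮ = V := by
  have : CompleteSpace T.ker := T.isClosed_ker.completeSpace_coe
  have hbot : T.ker ⊓ V = ⊥ := by
    rw [Submodule.eq_bot_iff]
    rintro x ⟨hx, hxV⟩
    have hTx : T x = 0 := hx
    have := h x hxV
    rw [hTx, norm_zero, zero_pow two_ne_zero] at this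
    exact norm_eq_zero.1 (pow_eq_zero_iff two_ne_zero |>.1
      (le_antisymm (nonpos_of_mul_nonpos_right this hA) (sq_nonneg _)))
  have := Submodule.sup_orthogonal_inf_of_hasOrthogonalProjection hV
  rwa [Submodule.orthogonal_orthogonal, hbot, sup_bot_eq] at this

variable [CompleteSpace F]

theorem norm_sq_adjoint_apply_le {T : E →L[𝕜] F} {B : ℝ} (hB : 0 ≤ B)
    (h : ∀ x, ‖T x‖ ^ 2 ≤ B * ‖x‖ ^ 2) (y : F) : ‖(T†) y‖ ^ 2 ≤ B * ‖y‖ ^ 2 := by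
  rw [← opNorm_le_sqrt_iff _ hB] at h
  exact (opNorm_le_sqrt_iff _ hB).1 (by rwa [LinearIsometryEquiv.norm_map]) y

theorem mul_norm_sq_le_norm_sq_adjoint_apply {T : E →L[𝕜] F} {A : ℝ}
    (h : ∀ x ∈ T.kerᗮ, A * ‖x‖ ^ 2 ≤ ‖T x‖ ^ 2) :
    ∀ y ∈ (T†).kerᗮ, A * ‖y‖ ^ 2 ≤ ‖(T†) y‖ ^ 2 := by
  have hclosed : IsClosed {y : F | A * ‖y‖ ^ 2 ≤ ‖(T†) y‖ ^ 2} :=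
    isClosed_le (by fun_prop) (by fun_prop)
  have hrange : ∀ x, A * ‖T x‖ ^ 2 ≤ ‖(T†) (T x)‖ ^ 2 := by
    intro x
    obtain ⟨y, hy, hTy, -⟩ := T.exists_mem_orthogonal_ker_apply_eq x
    rw [← hTy]
    refine mul_sq_le_sq_of_sq_le_mul (norm_nonneg _) (norm_nonneg y) ?_ (h y hy)
    calc ‖T y‖ ^ 2 = RCLike.re ⟪y, (T†) (T y)⟫_𝕜 := by
          rw [adjoint_inner_right, inner_self_eq_norm_sq]
      _ ≤ ‖y‖ * ‖(T†) (T y)‖ := re_inner_le_norm _ _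
  intro y hy
  rw [← T.orthogonal_range, Submodule.orthogonal_orthogonal_eq_closure, ← SetLike.mem_coe,
    Submodule.topologicalClosure_coe] at hy
  refine closure_minimal ?_ hclosed hy
  rintro _ ⟨x, rfl⟩
  exact hrange x

theorem bounds_adjoint_of_bounds {T : E →L[𝕜] F} {A B : ℝ} (hB : 0 ≤ B)
    (h : ∀ x ∈ T.kerᗮ, A * ‖x‖ ^ 2 ≤ ‖T x‖ ^ 2 ∧ ‖T x‖ ^ 2 ≤ B * ‖x‖ ^ 2) :
    ∀ y ∈ (T†).kerᗮ, A * ‖y‖ ^ 2 ≤ ‖(T†) y‖ ^ 2 ∧ ‖(T†) y‖ ^ 2 ≤ B * ‖y‖ ^ 2 :=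
  fun y hy => ⟨mul_norm_sq_le_norm_sq_adjoint_apply (fun x hx => (h x hx).1) y hy,
    norm_sq_adjoint_apply_le hB (forall_norm_sq_apply_le_of_orthogonal_ker hB
      fun x hx => (h x hx).2) y⟩

end ContinuousLinearMap

theorem lp.hasSum_norm_sq {ι : Type*} {E : ι → Type*} [∀ i, NormedAddCommGroup (E i)]
    (c : lp E 2) : HasSum (fun i => ‖c i‖ ^ 2) (‖c‖ ^ 2) := by
  simpa using lp.hasSum_norm (p := 2) (by norm_num) c

theorem lp.exists_continuousLinearMap_apply_eq {𝕜 ι E : Type*} {F : ι → Type*}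
    [NontriviallyNormedField 𝕜] [SeminormedAddCommGroup E] [NormedSpace 𝕜 E]
    [∀ i, NormedAddCommGroup (F i)] [∀ i, NormedSpace 𝕜 (F i)]
    (P : ∀ i, E →L[𝕜] F i) {B : ℝ} (hB : 0 ≤ B) (hP : ∀ x, Summable fun i => ‖P i x‖ ^ 2)
    (hPB : ∀ x, ∑' i, ‖P i x‖ ^ 2 ≤ B * ‖x‖ ^ 2) :
    ∃ U : E →L[𝕜] lp F 2, ∀ x i, U x i = P i x := by
  have hmem : ∀ x, Memℓp (fun i => P i x) 2 := fun x => memℓp_gen (by simpa using hP x)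
  let U : E →ₗ[𝕜] lp F 2 :=
    { toFun := fun x => ⟨fun i => P i x, hmem x⟩
      map_add' := fun x y => lp.ext (funext fun i => map_add (P i) x y)
      map_smul' := fun a x => lp.ext (funext fun i => map_smul (P i) a x) }
  refine ⟨U.mkContinuous √B fun x => ?_, fun x i => rfl⟩
  rw [le_sqrt_mul_iff_sq_le (norm_nonneg _) (norm_nonneg _) hB,
    ← (lp.hasSum_norm_sq (U x)).tsum_eq]
  exact hPB x

section FusionFrame

variable {H : Type*} [NormedAddCommGroup H] [InnerProductSpace ℂ H] {I : Type*}

theorem Submodule.inner_real_smul_orthogonalProjectionOnto (K : Submodule ℂ H)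
    [K.HasOrthogonalProjection] (x : K) (a : ℝ) (f : H) :
    ⟪(x : H), a • (K.orthogonalProjectionOnto f : H)⟫_ℂ = ⟪a • (x : H), f⟫_ℂ := by
  rw [← Complex.coe_smul, ← Complex.coe_smul a (x : H), inner_smul_right, inner_smul_left,
    Complex.conj_ofReal, ← Submodule.coe_inner,
    Submodule.inner_orthogonalProjectionOnto_eq_of_mem_left]

def IsAnalysisOperator (Wi : I → Submodule ℂ H) [∀ i, CompleteSpace (Wi i)] (w : I → ℝ)
    (U : H →L[ℂ] lp (fun i => Wi i) 2) : Prop :=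
  ∀ f i, (U f i : H) = w i • ((Wi i).orthogonalProjectionOnto f : H)

variable {Wi : I → Submodule ℂ H} {w : I → ℝ}

theorem hasSum_smul_iff_apply_single [DecidableEq I] (T : lp (fun i => Wi i) 2 →L[ℂ] H) :
    (∀ c, HasSum (fun i => w i • (c i : H)) (T c))
      ↔ ∀ i (x : Wi i), T (lp.single 2 i x) = w i • (x : H) := by
  constructor
  · intro h i x
    refine (h (lp.single 2 i x)).unique (hasSum_single i fun j hj => ?_) |>.trans ?_
    · simp [hj]
    · simp
  · intro h c
    simpa only [h] using (lp.hasSum_single (by simp) c).mapL T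

variable [∀ i, CompleteSpace (Wi i)]

namespace IsAnalysisOperator

variable {U : H →L[ℂ] lp (fun i => Wi i) 2}

theorem hasSum_norm_sq (hU : IsAnalysisOperator Wi w U) (f : H) :
    HasSum (fun i => w i ^ 2 * ‖((Wi i).orthogonalProjectionOnto f : H)‖ ^ 2) (‖U f‖ ^ 2) := by
  convert lp.hasSum_norm_sq (U f) using 2 with i
  change _ = ‖(U f i : H)‖ ^ 2
  rw [hU, norm_smul, mul_pow, Real.norm_eq_abs, sq_abs]

theorem frame_iff (hU : IsAnalysisOperator Wi w U) (W : Submodule ℂ H) (A B : ℝ) :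
    (∀ f ∈ W,
      Summable (fun i => w i ^ 2 * ‖((Wi i).orthogonalProjectionOnto f : H)‖ ^ 2)
      ∧ A * ‖f‖ ^ 2 ≤ ∑' i, w i ^ 2 * ‖((Wi i).orthogonalProjectionOnto f : H)‖ ^ 2
      ∧ ∑' i, w i ^ 2 * ‖((Wi i).orthogonalProjectionOnto f : H)‖ ^ 2 ≤ B * ‖f‖ ^ 2)
    ↔ ∀ f ∈ W, A * ‖f‖ ^ 2 ≤ ‖U f‖ ^ 2 ∧ ‖U f‖ ^ 2 ≤ B * ‖f‖ ^ 2 := by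
  simp only [(hU.hasSum_norm_sq _).summable, (hU.hasSum_norm_sq _).tsum_eq, true_and]

theorem ker_eq (hU : IsAnalysisOperator Wi w U) (hw : ∀ i, w i ≠ 0) :
    U.ker = (⨆ i, Wi i)ᗮ := by
  ext f
  have hcoord : ∀ i, U f i = 0 ↔ f ∈ (Wi i)ᗮ := fun i => by
    rw [← Submodule.coe_eq_zero, hU, smul_eq_zero, Submodule.coe_eq_zero,
      Submodule.orthogonalProjectionOnto_eq_zero_iff, or_iff_right (hw i)]
  rw [LinearMap.mem_ker, ← Submodule.iInf_orthogonal, Submodule.mem_iInf, ← forall_congr' hcoord]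
  exact ⟨fun h i => by rw [show U f = 0 from h, lp.coeFn_zero, Pi.zero_apply],
    fun h => lp.ext (funext h)⟩

end IsAnalysisOperator

theorem exists_isAnalysisOperator {W : Submodule ℂ H} [CompleteSpace W] (hWiW : ∀ i, Wi i ≤ W)
    {B : ℝ} (hB : 0 ≤ B)
    (h : ∀ f ∈ W, Summable (fun i => w i ^ 2 * ‖((Wi i).orthogonalProjectionOnto f : H)‖ ^ 2)
      ∧ ∑' i, w i ^ 2 * ‖((Wi i).orthogonalProjectionOnto f : H)‖ ^ 2 ≤ B * ‖f‖ ^ 2) :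
    ∃ U, IsAnalysisOperator Wi w U := by
  have hnorm : ∀ i f, ‖(w i • (Wi i).orthogonalProjectionOnto) f‖ ^ 2
      = w i ^ 2 * ‖((Wi i).orthogonalProjectionOnto (W.starProjection f) : H)‖ ^ 2 := by
    intro i f
    rw [Submodule.orthogonalProjectionOnto_starProjection_of_le (hWiW i),
      smul_apply, norm_smul, mul_pow, Real.norm_eq_abs, sq_abs, Submodule.coe_norm]
  obtain ⟨U, hU⟩ := lp.exists_continuousLinearMap_apply_eq
    (fun i => w i • (Wi i).orthogonalProjectionOnto) hB
    (fun f => by simpa only [hnorm] using (h _ (W.starProjection_apply_mem f)).1)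
    (fun f => by
      simp only [hnorm]
      calc _ ≤ B * ‖W.starProjection f‖ ^ 2 := (h _ (W.starProjection_apply_mem f)).2
        _ ≤ B * ‖f‖ ^ 2 := by gcongr; exact W.norm_starProjection_apply_le f)
  exact ⟨U, fun f i => by rw [hU]; rfl⟩

variable [CompleteSpace H]

theorem IsAnalysisOperator.orthogonal_ker {U : H →L[ℂ] lp (fun i => Wi i) 2}
    (hU : IsAnalysisOperator Wi w U) (hw : ∀ i, w i ≠ 0) :
    U.kerᗮ = (⨆ i, Wi i).topologicalClosure := by
  rw [hU.ker_eq hw, Submodule.orthogonal_orthogonal_eq_closure]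

theorem inner_adjoint_apply_eq_inner_apply_single [DecidableEq I]
    (T : lp (fun i => Wi i) 2 →L[ℂ] H) (f : H) (i : I) (x : Wi i) :
    ⟪(x : H), (((T†) f) i : H)⟫_ℂ = ⟪T (lp.single 2 i x), f⟫_ℂ := by
  rw [← Submodule.coe_inner, ← lp.inner_single_left (G := fun i => Wi i) i x,
    ContinuousLinearMap.adjoint_inner_right]

theorem isAnalysisOperator_adjoint_iff [DecidableEq I] (T : lp (fun i => Wi i) 2 →L[ℂ] H) :
    IsAnalysisOperator Wi w (T†) ↔ ∀ i (x : Wi i), T (lp.single 2 i x) = w i • (x : H) := by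
  constructor
  · intro hU i x
    refine ext_inner_right ℂ fun f => ?_
    rw [← inner_adjoint_apply_eq_inner_apply_single, hU,
      Submodule.inner_real_smul_orthogonalProjectionOnto]
  · intro h f i
    have hcoord : ((T†) f) i = w i • (Wi i).orthogonalProjectionOnto f := by
      refine ext_inner_left ℂ fun x => ?_
      rw [Submodule.coe_inner, inner_adjoint_apply_eq_inner_apply_single, h, Submodule.coe_inner,
        Submodule.coe_smul_of_tower, Submodule.inner_real_smul_orthogonalProjectionOnto]
    rw [hcoord]
    rfl

theorem hasSum_iff_isAnalysisOperator_adjoint [DecidableEq I]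
    (T : lp (fun i => Wi i) 2 →L[ℂ] H) :
    (∀ c, HasSum (fun i => w i • (c i : H)) (T c)) ↔ IsAnalysisOperator Wi w (T†) :=
  (hasSum_smul_iff_apply_single T).trans (isAnalysisOperator_adjoint_iff T).symm

end FusionFrame

/-- Characterization of fusion frames: `(W_i,w_i)` is a fusion frame for the closed
subspace `W` with bounds `A, B` iff (1) the span of `⋃ᵢ Wᵢ` is dense in `W`, and
(2) the synthesis operator `T_W` is well defined and bounded on `K_W = ⊕ᵢ Wᵢ` and
satisfies `A‖c‖² ≤ ‖T_W c‖² ≤ B‖c‖²` for all `c ∈ (ker T_W)ᗮ`. -/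
theorem fusion_frame_iff_synthesis_bounds
    {H : Type*} [NormedAddCommGroup H] [InnerProductSpace ℂ H] [CompleteSpace H]
    {I : Type*} (W : Submodule ℂ H) [CompleteSpace W]
    (Wi : I → Submodule ℂ H) [∀ i, CompleteSpace (Wi i)] (hWiW : ∀ i, Wi i ≤ W)
    (w : I → ℝ) (hw : ∀ i, 0 < w i)
    (A B : ℝ) (hA : 0 < A) (hAB : A ≤ B) :
    (∀ f ∈ W,
      Summable (fun i => (w i) ^ 2 * ‖((Wi i).orthogonalProjectionOnto f : H)‖ ^ 2)
      ∧ A * ‖f‖ ^ 2 ≤ ∑' i, (w i) ^ 2 * ‖((Wi i).orthogonalProjectionOnto f : H)‖ ^ 2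
      ∧ ∑' i, (w i) ^ 2 * ‖((Wi i).orthogonalProjectionOnto f : H)‖ ^ 2 ≤ B * ‖f‖ ^ 2)
    ↔ ((⨆ i, Wi i).topologicalClosure = W
      ∧ ∃ TW : lp (fun i => Wi i) 2 →L[ℂ] H,
          (∀ c, HasSum (fun i => w i • (c i : H)) (TW c))
          ∧ ∀ c ∈ (LinearMap.ker (TW : lp (fun i => Wi i) 2 →ₗ[ℂ] H))ᗮ,
              A * ‖c‖ ^ 2 ≤ ‖TW c‖ ^ 2 ∧ ‖TW c‖ ^ 2 ≤ B * ‖c‖ ^ 2) := by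
  classical
  have hB : 0 ≤ B := hA.le.trans hAB
  have hw0 : ∀ i, w i ≠ 0 := fun i => (hw i).ne'
  constructor
  · intro hframe
    obtain ⟨U, hU⟩ := exists_isAnalysisOperator hWiW hB
      fun f hf => ⟨(hframe f hf).1, (hframe f hf).2.2⟩
    rw [hU.frame_iff] at hframe
    have hclosure : (⨆ i, Wi i).topologicalClosure ≤ W :=
      Submodule.topologicalClosure_minimal _ (iSup_le hWiW)
        (completeSpace_coe_iff_isComplete.1 ‹_›).isClosed
    have hW : U.kerᗮ = W := U.orthogonal_ker_eq_of_le hA (hU.orthogonal_ker hw0 ▸ hclosure)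
      fun f hf => (hframe f hf).1
    refine ⟨by rw [← hU.orthogonal_ker hw0, hW], U†, ?_,
      U.bounds_adjoint_of_bounds hB (by rwa [hW])⟩
    rwa [hasSum_iff_isAnalysisOperator_adjoint, ContinuousLinearMap.adjoint_adjoint]
  · rintro ⟨hdense, T, hT, hbounds⟩
    have hU := (hasSum_iff_isAnalysisOperator_adjoint T).1 hT
    rw [hU.frame_iff, ← hdense, ← hU.orthogonal_ker hw0]
    exact T.bounds_adjoint_of_bounds hB hbounds
end
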